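/- arXiv:2405.09836 — 4 statements merged into one kernel-verified Lean document; each statement's English description precedes it below -/
import Mathlib

section
/- Let K be a field and n ≥ 1 an integer. The toric ideal of the complete graph K_n is subgraph splittable if and only if n ≥ 4. -/
open MvPolynomial

/-- The monomial `y_u * y_w` associated to the edge `e = {u, w}`. -/
noncomputable def edgeMon (K : Type) [Field K] {V : Type} (e : Sym2 V) :
    MvPolynomial V K :=
  Sym2.lift ⟨fun u w => X u * X w, fun u w => mul_comm _ _⟩ e

/-- The toric ideal `I_G` of a graph `G`, i.e. the kernel of the `K`-algebra map
`K[x_e : e ∈ E(G)] → K[y_v : v ∈ V]`, sending `x_e ↦ y_u y_w` for `e = {u, w}`. -/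
noncomputable def toricIdeal (K : Type) [Field K] {V : Type} (G : SimpleGraph V) :
    Ideal (MvPolynomial G.edgeSet K) :=
  RingHom.ker (MvPolynomial.aeval (fun e : G.edgeSet => edgeMon K (e : Sym2 V)) :
    MvPolynomial G.edgeSet K →ₐ[K] MvPolynomial V K)

/-- For a subgraph `H ≤ G`, the ideal of `K[x_e : e ∈ E(G)]` obtained by extending
the toric ideal `I_H` along the inclusion of variables `x_e` (`e ∈ E(H)`). -/
noncomputable def extIdeal (K : Type) [Field K] {V : Type} (G H : SimpleGraph V)
    (h : H ≤ G) : Ideal (MvPolynomial G.edgeSet K) :=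
  (toricIdeal K H).map
    (MvPolynomial.rename (Set.inclusion (SimpleGraph.edgeSet_mono h)) :
      MvPolynomial H.edgeSet K →ₐ[K] MvPolynomial G.edgeSet K)

/-- A subgraph splitting `I_G = I_{G₁} + I_{G₂}`, with `I_{G₁} ≠ I_G ≠ I_{G₂}`. -/
def IsSubgraphSplitting (K : Type) [Field K] {V : Type} (G G₁ G₂ : SimpleGraph V)
    (h₁ : G₁ ≤ G) (h₂ : G₂ ≤ G) : Prop :=
  toricIdeal K G = extIdeal K G G₁ h₁ + extIdeal K G G₂ h₂ ∧
    extIdeal K G G₁ h₁ ≠ toricIdeal K G ∧ extIdeal K G G₂ h₂ ≠ toricIdeal K G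

/-- `I_G` is subgraph splittable. -/
def SubgraphSplittable (K : Type) [Field K] {V : Type} (G : SimpleGraph V) : Prop :=
  ∃ (G₁ G₂ : SimpleGraph V) (h₁ : G₁ ≤ G) (h₂ : G₂ ≤ G),
    IsSubgraphSplitting K G G₁ G₂ h₁ h₂

/-- Alternating products: for a list `[e₁, …, e₂q]` the first component is
`x_{e₁} x_{e₃} ⋯` (odd positions) and the second is `x_{e₂} x_{e₄} ⋯` (even positions). -/
noncomputable def altProd (K : Type) [Field K] {α : Type} :
    List α → MvPolynomial α K × MvPolynomial α K
  | [] => (1, 1)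
  | a :: l => (X a * (altProd K l).2, (altProd K l).1)

/-- The edges of a walk in `G`, as a list of elements of `E(G)`. -/
def walkEdgeList {V : Type} {G : SimpleGraph V} {u v : V} (w : G.Walk u v) :
    List G.edgeSet :=
  w.edges.attachWith (· ∈ G.edgeSet) (fun _ he => w.edges_subset_edgeSet he)

/-- The binomial `B_w` of an even closed walk `w = (e_{i₁}, …, e_{i₂q})`:
`∏ x_{e_{i_{2k-1}}} - ∏ x_{e_{i_{2k}}}`. -/
noncomputable def walkBinomial (K : Type) [Field K] {V : Type} {G : SimpleGraph V}
    {v : V} (w : G.Walk v v) : MvPolynomial G.edgeSet K :=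
  (altProd K (walkEdgeList w)).1 - (altProd K (walkEdgeList w)).2

/-- `f` is a binomial of `I_G`, i.e. `f = B_w` for an even closed walk `w` of `G`. -/
def IsBinomial (K : Type) [Field K] {V : Type} (G : SimpleGraph V)
    (f : MvPolynomial G.edgeSet K) : Prop :=
  ∃ (v : V) (w : G.Walk v v), Even w.length ∧ f = walkBinomial K w

/-- `S` is a minimal generating set of binomials of the ideal `I`: all its members
are binomials `B_w`, it generates `I`, and no proper subset generates `I`. -/
def IsMinBinomialGens (K : Type) [Field K] {V : Type} (G : SimpleGraph V)
    (S : Set (MvPolynomial G.edgeSet K)) (I : Ideal (MvPolynomial G.edgeSet K)) : Prop :=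
  (∀ f ∈ S, IsBinomial K G f) ∧ Ideal.span S = I ∧
    ∀ T : Set (MvPolynomial G.edgeSet K), T ⊂ S → Ideal.span T ≠ I

/-- A family of even closed walks `w₁, …, w_r` of `G` (the data underlying a set of
binomials `S = {B_{w₁}, …, B_{w_r}}`). -/
structure BinomialWalkGens (K : Type) [Field K] {V : Type} (G : SimpleGraph V) where
  r : ℕ
  base : Fin r → V
  walk : (i : Fin r) → G.Walk (base i) (base i)
  even : ∀ i, Even (walk i).length

namespace BinomialWalkGens

variable {K : Type} [Field K] {V : Type} {G : SimpleGraph V}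

/-- The set of binomials `{B_{w₁}, …, B_{w_r}}`. -/
def binomials (S : BinomialWalkGens K G) : Set (MvPolynomial G.edgeSet K) :=
  Set.range fun i => walkBinomial K (S.walk i)

/-- `S = {B_{w₁}, …, B_{w_r}}` is a minimal generating set of binomials of `I`. -/
def IsMinGens (S : BinomialWalkGens K G) (I : Ideal (MvPolynomial G.edgeSet K)) : Prop :=
  IsMinBinomialGens K G S.binomials I

/-- The subgraph `G_S^e` of `G`: the union of the walks `w_i` with `e ∈ E(w_i)`. -/
def GSe (S : BinomialWalkGens K G) (e : Sym2 V) : SimpleGraph V :=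
  SimpleGraph.fromEdgeSet (⋃ i ∈ {i : Fin S.r | e ∈ (S.walk i).edges}, {f | f ∈ (S.walk i).edges})

lemma GSe_le (S : BinomialWalkGens K G) (e : Sym2 V) : S.GSe e ≤ G := by
  intro u w h
  rw [GSe, SimpleGraph.fromEdgeSet_adj] at h
  obtain ⟨hm, hne⟩ := h
  simp only [Set.mem_iUnion, Set.mem_setOf_eq] at hm
  obtain ⟨i, -, hi⟩ := hm
  exact G.mem_edgeSet.mp ((S.walk i).edges_subset_edgeSet hi)

/-- The subgraph `G_S^F = ⋃_{e ∈ F} G_S^e` of `G`. -/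
def GSF (S : BinomialWalkGens K G) (F : Set (Sym2 V)) : SimpleGraph V :=
  ⨆ e ∈ F, S.GSe e

lemma GSF_le (S : BinomialWalkGens K G) (F : Set (Sym2 V)) : S.GSF F ≤ G :=
  iSup₂_le fun e _ => S.GSe_le e

/-- The subgraph `G_S^v` of `G`: the union of the edge sets of the walks `w_i`
with `v ∈ V(w_i)`. -/
def GSv (S : BinomialWalkGens K G) (v : V) : SimpleGraph V :=
  SimpleGraph.fromEdgeSet (⋃ i ∈ {i : Fin S.r | v ∈ (S.walk i).support}, {f | f ∈ (S.walk i).edges})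

lemma GSv_le (S : BinomialWalkGens K G) (v : V) : S.GSv v ≤ G := by
  intro u w h
  rw [GSv, SimpleGraph.fromEdgeSet_adj] at h
  obtain ⟨hm, hne⟩ := h
  simp only [Set.mem_iUnion, Set.mem_setOf_eq] at hm
  obtain ⟨i, -, hi⟩ := hm
  exact G.mem_edgeSet.mp ((S.walk i).edges_subset_edgeSet hi)

end BinomialWalkGens

/-- `I_G` is edge splittable: there are an edge `e` of `G` and a minimal generating
set of binomials `S` of `I_G` such that `I_G = I_{G_S^e} + I_{G∖e}` is a subgraph
splitting of `I_G`. -/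
def EdgeSplittable (K : Type) [Field K] {V : Type} (G : SimpleGraph V) : Prop :=
  ∃ (e : Sym2 V) (_ : e ∈ G.edgeSet) (S : BinomialWalkGens K G),
    S.IsMinGens (toricIdeal K G) ∧
    IsSubgraphSplitting K G (S.GSe e) (G.deleteEdges {e}) (S.GSe_le e)
      (SimpleGraph.deleteEdges_le _)

/-- A minimal splitting: a subgraph splitting `I_G = I_{G₁} + I_{G₂}` admitting
minimal generating sets of binomials `S` of `I_{G₁}` and `T` of `I_{G₂}` such that
`S ∪ T` is a minimal generating set of `I_G`. -/
def IsMinimalSplitting (K : Type) [Field K] {V : Type} (G G₁ G₂ : SimpleGraph V)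
    (h₁ : G₁ ≤ G) (h₂ : G₂ ≤ G) : Prop :=
  IsSubgraphSplitting K G G₁ G₂ h₁ h₂ ∧
    ∃ S T : Set (MvPolynomial G.edgeSet K),
      IsMinBinomialGens K G S (extIdeal K G G₁ h₁) ∧
      IsMinBinomialGens K G T (extIdeal K G G₂ h₂) ∧
      IsMinBinomialGens K G (S ∪ T) (toricIdeal K G)

/-- A reduced splitting: a subgraph splitting `I_G = I_{G₁} + I_{G₂}` such that for all
subgraphs `H₁ ⊆ G₁`, `H₂ ⊆ G₂` with `I_G = I_{H₁} + I_{H₂}` one has `I_{H₁} = I_{G₁}`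
and `I_{H₂} = I_{G₂}`. -/
def IsReducedSplitting (K : Type) [Field K] {V : Type} (G G₁ G₂ : SimpleGraph V)
    (h₁ : G₁ ≤ G) (h₂ : G₂ ≤ G) : Prop :=
  IsSubgraphSplitting K G G₁ G₂ h₁ h₂ ∧
    ∀ (H₁ H₂ : SimpleGraph V) (hH₁ : H₁ ≤ G₁) (hH₂ : H₂ ≤ G₂),
      toricIdeal K G = extIdeal K G H₁ (hH₁.trans h₁) + extIdeal K G H₂ (hH₂.trans h₂) →
      extIdeal K G H₁ (hH₁.trans h₁) = extIdeal K G G₁ h₁ ∧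
        extIdeal K G H₂ (hH₂.trans h₂) = extIdeal K G G₂ h₂

/-- The wheel graph `W_{n+1}`: vertices `0, …, n-1` (the cycle `C_n`, with edges between
`i` and `(i+1) % n`) together with the universal vertex `n` joined to all cycle vertices. -/
def wheelGraph (n : ℕ) : SimpleGraph (Fin (n + 1)) :=
  SimpleGraph.fromRel fun u v =>
    (u.val < n ∧ v.val < n ∧ v.val = (u.val + 1) % n) ∨ (u.val = n ∧ v.val < n)

namespace ToricAux
open Finsupp

variable (K : Type) [Field K] {V : Type}

noncomputable def sig : Sym2 V → (V →₀ ℕ) :=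
  Sym2.lift ⟨fun u w => Finsupp.single u 1 + Finsupp.single w 1, fun u w => add_comm _ _⟩

lemma sig_mk (u w : V) : sig (s(u,w)) = Finsupp.single u 1 + Finsupp.single w 1 := rfl

lemma edgeMon_eq (e : Sym2 V) : edgeMon K e = monomial (sig e) (1:K) := by
  induction e with
  | _ u w =>
    rw [edgeMon, Sym2.lift_mk]
    dsimp only
    rw [sig_mk]
    show monomial _ 1 * monomial _ 1 = _
    rw [monomial_mul, one_mul]

variable {E : Type}

noncomputable def Adeg (g : E → Sym2 V) (a : E →₀ ℕ) : V →₀ ℕ := a.sum fun e k => k • sig (g e)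

lemma Adeg_add (g : E → Sym2 V) (a b : E →₀ ℕ) :
    Adeg g (a + b) = Adeg g a + Adeg g b := by
  classical
  exact Finsupp.sum_add_index' (fun e => zero_smul _ _) (fun e k l => add_smul _ _ _)

lemma Adeg_single (g : E → Sym2 V) (e : E) (k : ℕ) :
    Adeg g (Finsupp.single e k) = k • sig (g e) := by
  classical
  exact Finsupp.sum_single_index (zero_smul _ _)

lemma aeval_monomial_eq (g : E → Sym2 V) (a : E →₀ ℕ) (c : K) :
    (aeval fun e : E => edgeMon K (g e)) (monomial a c) = monomial (Adeg g a) c := by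
  classical
  rw [aeval_monomial]
  have : (a.prod fun e k => edgeMon K (g e) ^ k) =
      monomial (Adeg g a) (1:K) := by
    rw [Adeg, Finsupp.sum, monomial_sum_one]
    refine Finset.prod_congr rfl fun e _ => ?_
    show edgeMon K (g e) ^ a e = _
    rw [edgeMon_eq, monomial_pow, one_pow]
  rw [this, algebraMap_eq, C_mul_monomial, mul_one]

end ToricAux

namespace ToricAux
open Finsupp
variable {K : Type} [Field K] {V E : Type}

/-- The binomial fibers set. -/
def binSet (K : Type) [Field K] {V E : Type} (g : E → Sym2 V) : Set (MvPolynomial E K) :=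
  {p | ∃ a b : E →₀ ℕ, Adeg g a = Adeg g b ∧ p = monomial a (1:K) - monomial b 1}

lemma mem_span_binomials (g : E → Sym2 V) :
    ∀ (N : ℕ) (f : MvPolynomial E K), f.support.card ≤ N →
    (aeval fun e : E => edgeMon K (g e)) f = 0 →
    f ∈ Ideal.span (binSet K g) := by
  classical
  intro N
  induction N with
  | zero =>
    intro f hcard _
    have : f = 0 := by
      rwa [Nat.le_zero, Finset.card_eq_zero, MvPolynomial.support_eq_empty] at hcard
    simp [this]
  | succ N ih =>
    intro f hcard hker
    by_cases hf0 : f = 0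
    · simp [hf0]
    obtain ⟨a, ha⟩ := MvPolynomial.support_nonempty.mpr hf0
    have hΦ : (aeval fun e : E => edgeMon K (g e)) f
        = ∑ d ∈ f.support, monomial (Adeg g d) (coeff d f) := by
      conv_lhs => rw [f.as_sum]
      rw [map_sum]
      exact Finset.sum_congr rfl fun d _ => aeval_monomial_eq K g d _
    have key : ∃ b ∈ f.support, b ≠ a ∧ Adeg g b = Adeg g a := by
      by_contra hno
      push_neg at hno
      have hc : coeff (Adeg g a) ((aeval fun e : E => edgeMon K (g e)) f) = coeff a f := by
        rw [hΦ, MvPolynomial.coeff_sum]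
        rw [Finset.sum_eq_single a (fun d hd hda => by
          rw [MvPolynomial.coeff_monomial, if_neg (fun h => hno d hd hda h)])
          (fun h => absurd ha h)]
        rw [MvPolynomial.coeff_monomial, if_pos rfl]
      rw [hker, MvPolynomial.coeff_zero] at hc
      exact MvPolynomial.mem_support_iff.mp ha hc.symm
    obtain ⟨b, hb, hba, hab⟩ := key
    set c := coeff a f with hc
    set p : MvPolynomial E K := monomial a (1:K) - monomial b 1 with hpdef
    have hp : p ∈ binSet K g := ⟨a, b, hab.symm, rfl⟩
    have hkerp : (aeval fun e : E => edgeMon K (g e)) p = 0 := by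
      rw [hpdef, map_sub, aeval_monomial_eq, aeval_monomial_eq, hab]
      ring
    have hker2 : (aeval fun e : E => edgeMon K (g e)) (f - C c * p) = 0 := by
      rw [map_sub, map_mul, hkerp, hker, mul_zero, sub_zero]
    have hsupp : (f - C c * p).support ⊆ f.support.erase a := by
      intro d hd
      rw [MvPolynomial.mem_support_iff] at hd
      have hcd : coeff d (f - C c * p) =
          coeff d f - c * ((if a = d then (1:K) else 0) - if b = d then 1 else 0) := by
        rw [MvPolynomial.coeff_sub, MvPolynomial.coeff_C_mul, hpdef, MvPolynomial.coeff_sub,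
          MvPolynomial.coeff_monomial, MvPolynomial.coeff_monomial]
      rcases eq_or_ne d a with rfl | hda
      · rw [hcd, if_pos rfl, if_neg hba, sub_zero, mul_one, ← hc, sub_self] at hd
        exact absurd rfl hd
      · rcases eq_or_ne d b with rfl | hdb
        · exact Finset.mem_erase.mpr ⟨hda, hb⟩
        · rw [hcd, if_neg (fun h => hda h.symm), if_neg (fun h => hdb h.symm),
            sub_zero, mul_zero, sub_zero] at hd
          exact Finset.mem_erase.mpr ⟨hda, MvPolynomial.mem_support_iff.mpr hd⟩
    have hcard2 : (f - C c * p).support.card ≤ N := by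
      calc (f - C c * p).support.card ≤ (f.support.erase a).card :=
            Finset.card_le_card hsupp
        _ ≤ N := by
            rw [Finset.card_erase_of_mem ha]
            omega
    have hmem := ih (f - C c * p) hcard2 hker2
    have : f = (f - C c * p) + C c * p := by ring
    rw [this]
    exact Ideal.add_mem _ hmem (Ideal.mul_mem_left _ _ (Ideal.subset_span hp))

end ToricAux



namespace ToricAux
open Finsupp SimpleGraph

variable {K : Type} [Field K]

/-- membership of a binomial supported in a subgraph. -/
lemma binom_mem_ext {V : Type} {G H : SimpleGraph V} (h : H ≤ G)
    (e1 e2 e3 e4 : G.edgeSet)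
    (h1 : (e1 : Sym2 V) ∈ H.edgeSet) (h2 : (e2 : Sym2 V) ∈ H.edgeSet)
    (h3 : (e3 : Sym2 V) ∈ H.edgeSet) (h4 : (e4 : Sym2 V) ∈ H.edgeSet)
    (hσ : sig (e1 : Sym2 V) + sig (e2 : Sym2 V) = sig (e3 : Sym2 V) + sig (e4 : Sym2 V)) :
    (X e1 * X e2 - X e3 * X e4 : MvPolynomial G.edgeSet K) ∈ extIdeal K G H h := by
  classical
  set f1 : H.edgeSet := ⟨e1, h1⟩
  set f2 : H.edgeSet := ⟨e2, h2⟩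
  set f3 : H.edgeSet := ⟨e3, h3⟩
  set f4 : H.edgeSet := ⟨e4, h4⟩
  have hmem : (X f1 * X f2 - X f3 * X f4 : MvPolynomial H.edgeSet K) ∈ toricIdeal K H := by
    rw [toricIdeal, RingHom.mem_ker]
    show (MvPolynomial.aeval fun e : H.edgeSet => edgeMon K (e : Sym2 V))
      (X f1 * X f2 - X f3 * X f4) = 0
    rw [map_sub, map_mul, map_mul, aeval_X, aeval_X, aeval_X, aeval_X]
    rw [edgeMon_eq, edgeMon_eq, edgeMon_eq, edgeMon_eq,
      monomial_mul, monomial_mul, one_mul]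
    show (MvPolynomial.monomial (sig (e1:Sym2 V) + sig (e2:Sym2 V))) 1 - _ = 0
    rw [hσ, sub_self]
  have := Ideal.mem_map_of_mem
    ((MvPolynomial.rename (Set.inclusion (SimpleGraph.edgeSet_mono h)) :
      MvPolynomial H.edgeSet K →ₐ[K] MvPolynomial G.edgeSet K)) hmem
  rw [map_sub, map_mul, map_mul, rename_X, rename_X, rename_X, rename_X] at this
  exact this

/-- extended ideals are contained in the toric ideal. -/
lemma extIdeal_le_toricIdeal {V : Type} {G H : SimpleGraph V} (h : H ≤ G) :
    extIdeal K G H h ≤ toricIdeal K G := by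
  rw [extIdeal, Ideal.map_le_iff_le_comap]
  intro p hp
  rw [toricIdeal, RingHom.mem_ker] at hp
  show (MvPolynomial.aeval fun e : G.edgeSet => edgeMon K (e : Sym2 V))
    (MvPolynomial.rename (Set.inclusion (SimpleGraph.edgeSet_mono h)) p) = 0
  rw [aeval_rename]
  exact hp

section Kn
variable {m : ℕ}

def w0 (m : ℕ) : Fin (m+4) := ⟨0, by omega⟩
def w1 (m : ℕ) : Fin (m+4) := ⟨1, by omega⟩
def w2 (m : ℕ) : Fin (m+4) := ⟨2, by omega⟩
def wL (m : ℕ) : Fin (m+4) := ⟨m+3, by omega⟩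

def G1 (m : ℕ) : SimpleGraph (Fin (m+4)) :=
  (⊤ : SimpleGraph (Fin (m+4))).deleteEdges {s(w0 m, wL m), s(w1 m, w2 m)}

def G2 (m : ℕ) : SimpleGraph (Fin (m+4)) :=
  (⊤ : SimpleGraph (Fin (m+4))).deleteEdges {s(w0 m, w1 m)}

lemma G1_le : G1 m ≤ (⊤ : SimpleGraph (Fin (m+4))) := SimpleGraph.deleteEdges_le _
lemma G2_le : G2 m ≤ (⊤ : SimpleGraph (Fin (m+4))) := SimpleGraph.deleteEdges_le _

/-- the edge `{u,v}` of the complete graph. -/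
def ed {u v : Fin (m+4)} (h : u ≠ v) : (⊤ : SimpleGraph (Fin (m+4))).edgeSet :=
  ⟨s(u,v), by simp [h]⟩

lemma mem_G1_edgeSet {u v : Fin (m+4)} (h : u ≠ v)
    (h1 : s(u,v) ≠ s(w0 m, wL m)) (h2 : s(u,v) ≠ s(w1 m, w2 m)) :
    s(u,v) ∈ (G1 m).edgeSet := by
  rw [G1, SimpleGraph.edgeSet_deleteEdges]
  exact ⟨by simp [h], by simp [h1, h2]⟩

lemma mem_G2_edgeSet {u v : Fin (m+4)} (h : u ≠ v)
    (h1 : s(u,v) ≠ s(w0 m, w1 m)) :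
    s(u,v) ∈ (G2 m).edgeSet := by
  rw [G2, SimpleGraph.edgeSet_deleteEdges]
  exact ⟨by simp [h], by simp [h1]⟩

end Kn
end ToricAux



namespace ToricAux
open Finsupp SimpleGraph

variable {K : Type} [Field K] {m : ℕ}

abbrev ET (m : ℕ) := (⊤ : SimpleGraph (Fin (m+4))).edgeSet

lemma sig4 {N : Type} (i j k l : N) :
    sig (s(i,k) : Sym2 N) + sig s(j,l) = sig s(i,j) + sig s(k,l) := by
  rw [sig_mk, sig_mk, sig_mk, sig_mk]; abel

/-- The candidate splitting ideal. -/
noncomputable def Jid (K : Type) [Field K] (m : ℕ) :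
    Ideal (MvPolynomial (ET m) K) :=
  extIdeal K ⊤ (G1 m) G1_le + extIdeal K ⊤ (G2 m) G2_le

lemma memJ_of_G1 {p : MvPolynomial (ET m) K}
    (h : p ∈ extIdeal K ⊤ (G1 m) G1_le) : p ∈ Jid K m := by
  rw [Jid, Submodule.add_eq_sup]; exact Submodule.mem_sup_left h

lemma memJ_of_G2 {p : MvPolynomial (ET m) K}
    (h : p ∈ extIdeal K ⊤ (G2 m) G2_le) : p ∈ Jid K m := by
  rw [Jid, Submodule.add_eq_sup]; exact Submodule.mem_sup_right h

lemma quadG1mem (k l : Fin (m+4)) (hk0 : k ≠ w0 m) (hk1 : k ≠ w1 m)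
    (hl0 : l ≠ w0 m) (hl1 : l ≠ w1 m) (hkl : k ≠ l)
    (hkL : k ≠ wL m) (hl2 : l ≠ w2 m)
    (E1 E2 E3 E4 : ET m)
    (h1 : (E1 : Sym2 (Fin (m+4))) = s(w0 m, k))
    (h2 : (E2 : Sym2 (Fin (m+4))) = s(w1 m, l))
    (h3 : (E3 : Sym2 (Fin (m+4))) = s(w0 m, w1 m))
    (h4 : (E4 : Sym2 (Fin (m+4))) = s(k, l)) :
    (X E1 * X E2 - X E3 * X E4 : MvPolynomial (ET m) K) ∈
      extIdeal K ⊤ (G1 m) G1_le := by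
  simp only [ne_eq, Fin.ext_iff, w0, w1, w2, wL] at hk0 hk1 hl0 hl1 hkl hkL hl2
  apply binom_mem_ext G1_le E1 E2 E3 E4
  · rw [h1]
    exact mem_G1_edgeSet (by simp [Fin.ext_iff, w0]; omega)
      (by simp only [ne_eq, Sym2.eq_iff, Fin.ext_iff, w0, wL]; omega)
      (by simp [Sym2.eq_iff, Fin.ext_iff, w0, w1, w2])
  · rw [h2]
    exact mem_G1_edgeSet (by simp [Fin.ext_iff, w1]; omega)
      (by simp only [ne_eq, Sym2.eq_iff, Fin.ext_iff, w1, w0, wL]; omega)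
      (by simp [Sym2.eq_iff, Fin.ext_iff, w1, w2]; omega)
  · rw [h3]
    exact mem_G1_edgeSet (by simp [Fin.ext_iff, w0, w1])
      (by simp [Sym2.eq_iff, Fin.ext_iff, w0, w1, wL])
      (by simp [Sym2.eq_iff, Fin.ext_iff, w0, w1, w2])
  · rw [h4]
    exact mem_G1_edgeSet (by simp [Fin.ext_iff]; omega)
      (by simp only [ne_eq, Sym2.eq_iff, Fin.ext_iff, w0, wL]; omega)
      (by simp [Sym2.eq_iff, Fin.ext_iff, w1, w2]; omega)
  · rw [h1, h2, h3, h4]; exact sig4 _ _ _ _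

lemma quad_mem0 (k l : Fin (m+4)) (hk0 : k ≠ w0 m) (hk1 : k ≠ w1 m)
    (hl0 : l ≠ w0 m) (hl1 : l ≠ w1 m) (hkl : k ≠ l)
    (E1 E2 E3 E4 : ET m)
    (h1 : (E1 : Sym2 (Fin (m+4))) = s(w0 m, k))
    (h2 : (E2 : Sym2 (Fin (m+4))) = s(w1 m, l))
    (h3 : (E3 : Sym2 (Fin (m+4))) = s(w0 m, w1 m))
    (h4 : (E4 : Sym2 (Fin (m+4))) = s(k, l)) :
    (X E1 * X E2 - X E3 * X E4 : MvPolynomial (ET m) K) ∈ Jid K m := by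
  by_cases hc : k ≠ wL m ∧ l ≠ w2 m
  · exact memJ_of_G1 (quadG1mem k l hk0 hk1 hl0 hl1 hkl hc.1 hc.2 E1 E2 E3 E4 h1 h2 h3 h4)
  · have hc2 : l ≠ wL m ∧ k ≠ w2 m := by
      push_neg at hc
      constructor
      · intro hlL
        rcases eq_or_ne k (wL m) with hkL | hkL
        · exact hkl (hkL.trans hlL.symm)
        · have := hc hkL
          simp only [Fin.ext_iff, w2, wL] at hlL this
          omega
      · intro hk2
        rcases eq_or_ne k (wL m) with hkL | hkL
        · simp only [Fin.ext_iff, w2, wL] at hk2 hkL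
          omega
        · exact hkl (hk2.trans (hc hkL).symm)
    -- intermediate monomial X_{0l} X_{1k}
    have hl0' : (w0 m) ≠ l := fun h => hl0 h.symm
    have hk1' : (w1 m) ≠ k := fun h => hk1 h.symm
    set F1 : ET m := ed hl0' with hF1
    set F2 : ET m := ed hk1' with hF2
    have hv1 : (F1 : Sym2 (Fin (m+4))) = s(w0 m, l) := rfl
    have hv2 : (F2 : Sym2 (Fin (m+4))) = s(w1 m, k) := rfl
    have T1 : (X F1 * X F2 - X E3 * X E4 : MvPolynomial (ET m) K) ∈ Jid K m := by
      apply memJ_of_G1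
      apply quadG1mem l k hl0 hl1 hk0 hk1 (Ne.symm hkl) hc2.1 hc2.2 F1 F2 E3 E4 hv1 hv2 h3
      rw [h4]; exact Sym2.eq_swap.symm
    have T2 : (X E1 * X E2 - X F1 * X F2 : MvPolynomial (ET m) K) ∈ Jid K m := by
      apply memJ_of_G2
      apply binom_mem_ext G2_le E1 E2 F1 F2
      · rw [h1]
        exact mem_G2_edgeSet (fun h => hk0 h.symm)
          (by simp only [ne_eq, Fin.ext_iff, w0, w1] at hk0 hk1 hl0 hl1 ⊢
              simp only [ne_eq, Sym2.eq_iff, Fin.ext_iff, w0, w1]; omega)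
      · rw [h2]
        exact mem_G2_edgeSet (fun h => hl1 h.symm)
          (by simp only [ne_eq, Fin.ext_iff, w0, w1] at hk0 hk1 hl0 hl1 ⊢
              simp only [ne_eq, Sym2.eq_iff, Fin.ext_iff, w0, w1]; omega)
      · rw [hv1]
        exact mem_G2_edgeSet (fun h => hl0 h.symm)
          (by simp only [ne_eq, Fin.ext_iff, w0, w1] at hk0 hk1 hl0 hl1 ⊢
              simp only [ne_eq, Sym2.eq_iff, Fin.ext_iff, w0, w1]; omega)
      · rw [hv2]
        exact mem_G2_edgeSet (fun h => hk1 h.symm)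
          (by simp only [ne_eq, Fin.ext_iff, w0, w1] at hk0 hk1 hl0 hl1 ⊢
              simp only [ne_eq, Sym2.eq_iff, Fin.ext_iff, w0, w1]; omega)
      · rw [h1, h2, hv1, hv2, sig_mk, sig_mk, sig_mk, sig_mk]; abel
    have : (X E1 * X E2 - X E3 * X E4 : MvPolynomial (ET m) K)
        = (X E1 * X E2 - X F1 * X F2) + (X F1 * X F2 - X E3 * X E4) := by ring
    rw [this]
    exact Ideal.add_mem _ T2 T1

end ToricAux



namespace ToricAux
open Finsupp SimpleGraph

variable {K : Type} [Field K] {V E : Type} {m : ℕ}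

/-- total degree of an exponent vector -/
def degf (a : E →₀ ℕ) : ℕ := a.sum fun _ k => k

lemma degf_add (a b : E →₀ ℕ) : degf (a + b) = degf a + degf b :=
  Finsupp.sum_add_index' (fun _ => rfl) (fun _ _ _ => rfl)

lemma degf_single (e : E) (k : ℕ) : degf (Finsupp.single e k) = k :=
  Finsupp.sum_single_index rfl

lemma degf_eq_zero {a : E →₀ ℕ} (h : degf a = 0) : a = 0 := by
  classical
  ext e
  simp only [Finsupp.coe_zero, Pi.zero_apply]
  by_cases he : e ∈ a.support
  · have : a e ≤ degf a := Finset.single_le_sum (fun _ _ => Nat.zero_le _) he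
    omega
  · exact Finsupp.notMem_support_iff.mp he

lemma sig_apply_of_not_mem {z : Sym2 V} {x : V} (h : x ∉ z) : sig z x = 0 := by
  classical
  induction z with
  | _ u w =>
    rw [Sym2.mem_iff] at h
    push_neg at h
    rw [sig_mk, Finsupp.add_apply, Finsupp.single_apply, Finsupp.single_apply,
      if_neg (fun hh => h.1 hh.symm), if_neg (fun hh => h.2 hh.symm)]
    rfl

lemma sig_apply_of_mem {z : Sym2 V} {x : V} (h : x ∈ z) : 1 ≤ sig z x := by
  classical
  induction z with
  | _ u w =>
    rw [Sym2.mem_iff] at h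
    rw [sig_mk, Finsupp.add_apply, Finsupp.single_apply, Finsupp.single_apply]
    rcases h with rfl | rfl
    · rw [if_pos rfl]; omega
    · rw [if_pos rfl]; omega

lemma Adeg_apply (g : E → Sym2 V) (a : E →₀ ℕ) (x : V) :
    Adeg g a x = ∑ e ∈ a.support, a e * sig (g e) x := by
  classical
  rw [Adeg, Finsupp.sum, Finsupp.finset_sum_apply]
  exact Finset.sum_congr rfl fun e _ => by rw [Finsupp.smul_apply, smul_eq_mul]

lemma exists_edge_of_Adeg_pos (g : E → Sym2 V) (a : E →₀ ℕ) (x : V)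
    (h : Adeg g a x ≠ 0) : ∃ e ∈ a.support, x ∈ g e := by
  classical
  by_contra hno
  push_neg at hno
  refine h ?_
  rw [Adeg_apply]
  exact Finset.sum_eq_zero fun e he => by
    rw [sig_apply_of_not_mem (hno e he), mul_zero]

lemma Adeg_pos_of_mem (g : E → Sym2 V) (a : E →₀ ℕ) {e : E} {x : V}
    (he : e ∈ a.support) (hx : x ∈ g e) : Adeg g a x ≠ 0 := by
  classical
  rw [Adeg_apply]
  intro h0
  rw [Finset.sum_eq_zero_iff] at h0
  have h1 := h0 e he
  have h2 := sig_apply_of_mem hx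
  have h3 := Finsupp.mem_support_iff.mp he
  rcases Nat.mul_eq_zero.mp h1 with h | h
  · exact h3 h
  · omega

/-- factor a variable out of a monomial -/
lemma monomial_factor {a : E →₀ ℕ} {e : E} (h : 1 ≤ a e) :
    (monomial a (1:K)) = X e * monomial (a - Finsupp.single e 1) 1 := by
  have hle : Finsupp.single e 1 ≤ a := Finsupp.single_le_iff.mpr h
  have hX : (X e : MvPolynomial E K) = monomial (Finsupp.single e 1) 1 := rfl
  rw [hX, monomial_mul, one_mul]
  rw [add_tsub_cancel_of_le hle]

/-- the general quadric membership, case `{i,j} = {w0, w1}` -/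
lemma quad_mem3 (i j k l : Fin (m+4)) (hik : i ≠ k) (hil : i ≠ l)
    (hjk : j ≠ k) (hjl : j ≠ l) (hkl : k ≠ l)
    (hB : (s(i,j) : Sym2 (Fin (m+4))) = s(w0 m, w1 m))
    (E1 E2 E3 E4 : ET m)
    (h1 : (E1 : Sym2 (Fin (m+4))) = s(i,k))
    (h2 : (E2 : Sym2 (Fin (m+4))) = s(j,l))
    (h3 : (E3 : Sym2 (Fin (m+4))) = s(i,j))
    (h4 : (E4 : Sym2 (Fin (m+4))) = s(k,l)) :
    (X E1 * X E2 - X E3 * X E4 : MvPolynomial (ET m) K) ∈ Jid K m := by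
  rcases Sym2.eq_iff.mp hB with ⟨hi, hj⟩ | ⟨hi, hj⟩
  · subst hi; subst hj
    exact quad_mem0 k l hik.symm hjk.symm hil.symm hjl.symm hkl E1 E2 E3 E4 h1 h2 h3 h4
  · subst hi; subst hj
    have h := quad_mem0 (K := K) l k hjl.symm hil.symm hjk.symm hik.symm hkl.symm
      E2 E1 E3 E4 h2 h1 (h3.trans Sym2.eq_swap) (h4.trans Sym2.eq_swap)
    rw [mul_comm (X E2) (X E1)] at h
    exact h

/-- the general quadric membership -/
lemma quad_mem (i j k l : Fin (m+4)) (hij : i ≠ j) (hik : i ≠ k) (hil : i ≠ l)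
    (hjk : j ≠ k) (hjl : j ≠ l) (hkl : k ≠ l)
    (E1 E2 E3 E4 : ET m)
    (h1 : (E1 : Sym2 (Fin (m+4))) = s(i,k))
    (h2 : (E2 : Sym2 (Fin (m+4))) = s(j,l))
    (h3 : (E3 : Sym2 (Fin (m+4))) = s(i,j))
    (h4 : (E4 : Sym2 (Fin (m+4))) = s(k,l)) :
    (X E1 * X E2 - X E3 * X E4 : MvPolynomial (ET m) K) ∈ Jid K m := by
  by_cases c3 : (s(i,j) : Sym2 (Fin (m+4))) = s(w0 m, w1 m)
  · exact quad_mem3 i j k l hik hil hjk hjl hkl c3 E1 E2 E3 E4 h1 h2 h3 h4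
  by_cases c4 : (s(k,l) : Sym2 (Fin (m+4))) = s(w0 m, w1 m)
  · have h := quad_mem3 (K := K) k l i j hik.symm hjk.symm hil.symm hjl.symm hij c4
      E1 E2 E4 E3 (h1.trans Sym2.eq_swap) (h2.trans Sym2.eq_swap) h4 h3
    have heq : (X E1 * X E2 - X E3 * X E4 : MvPolynomial (ET m) K)
        = (X E1 * X E2 - X E4 * X E3) := by ring
    rw [heq]; exact h
  by_cases c1 : (s(i,k) : Sym2 (Fin (m+4))) = s(w0 m, w1 m)
  · have h := quad_mem3 (K := K) i k j l hij hil hjk.symm hkl hjl c1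
      E3 E4 E1 E2 h3 h4 h1 h2
    have heq : (X E1 * X E2 - X E3 * X E4 : MvPolynomial (ET m) K)
        = -(X E3 * X E4 - X E1 * X E2) := by ring
    rw [heq]; exact neg_mem h
  by_cases c2 : (s(j,l) : Sym2 (Fin (m+4))) = s(w0 m, w1 m)
  · have h := quad_mem3 (K := K) j l i k hij.symm hjk hil.symm hkl.symm hik c2
      E3 E4 E2 E1 (h3.trans Sym2.eq_swap) (h4.trans Sym2.eq_swap) h2 h1
    have heq : (X E1 * X E2 - X E3 * X E4 : MvPolynomial (ET m) K)
        = -(X E3 * X E4 - X E2 * X E1) := by ring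
    rw [heq]; exact neg_mem h
  · apply memJ_of_G2
    apply binom_mem_ext G2_le E1 E2 E3 E4
    · rw [h1]; exact mem_G2_edgeSet hik c1
    · rw [h2]; exact mem_G2_edgeSet hjl c2
    · rw [h3]; exact mem_G2_edgeSet hij c3
    · rw [h4]; exact mem_G2_edgeSet hkl c4
    · rw [h1, h2, h3, h4]; exact sig4 _ _ _ _

end ToricAux



namespace ToricAux
open Finsupp SimpleGraph

variable {K : Type} [Field K] {E : Type} {m : ℕ}

abbrev gE (m : ℕ) : ET m → Sym2 (Fin (m+4)) := fun e => (e : Sym2 (Fin (m+4)))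

lemma ed_val {u v : Fin (m+4)} (h : u ≠ v) :
    ((ed h : ET m) : Sym2 (Fin (m+4))) = s(u,v) := rfl

lemma edge_rep (e : ET m) :
    ∃ u v : Fin (m+4), u ≠ v ∧ (e : Sym2 (Fin (m+4))) = s(u,v) := by
  obtain ⟨z, hz⟩ := e
  revert hz
  induction z with
  | _ u v =>
    intro hz
    refine ⟨u, v, ?_, rfl⟩
    intro h
    rw [SimpleGraph.mem_edgeSet, h] at hz
    exact (⊤ : SimpleGraph (Fin (m+4))).irrefl hz

lemma edge_rep_of_mem (e : ET m) {x : Fin (m+4)} (hx : x ∈ (e : Sym2 (Fin (m+4)))) :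
    ∃ y, x ≠ y ∧ (e : Sym2 (Fin (m+4))) = s(x,y) := by
  obtain ⟨y, hy⟩ := Sym2.mem_iff_exists.mp hx
  refine ⟨y, ?_, hy⟩
  intro h
  have h2 := e.2
  rw [hy, h] at h2
  rw [SimpleGraph.mem_edgeSet] at h2
  exact (⊤ : SimpleGraph (Fin (m+4))).irrefl h2

lemma monomial_two (c : E →₀ ℕ) (e f : E) :
    monomial (c + single e 1 + single f 1) (1:K) = monomial c 1 * (X e * X f) := by
  have hX : ∀ g : E, (X g : MvPolynomial E K) = monomial (single g 1) 1 := fun _ => rfl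
  rw [hX e, hX f, monomial_mul, monomial_mul, one_mul, add_assoc, one_mul]

lemma Adeg_two (c : ET m →₀ ℕ) (e f : ET m) :
    Adeg (gE m) (c + single e 1 + single f 1)
      = Adeg (gE m) c + sig (e : Sym2 (Fin (m+4))) + sig (f : Sym2 (Fin (m+4))) := by
  rw [Adeg_add, Adeg_add, Adeg_single, Adeg_single, one_smul, one_smul]

lemma split_two {b : ET m →₀ ℕ} {e f : ET m} (hef : e ≠ f)
    (he : 1 ≤ b e) (hf : 1 ≤ b f) :
    (b - single e 1 - single f 1) + single e 1 + single f 1 = b := by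
  have h1 : single e 1 ≤ b := Finsupp.single_le_iff.mpr he
  have h2 : single f 1 ≤ b - single e 1 := by
    refine Finsupp.single_le_iff.mpr ?_
    rw [Finsupp.tsub_apply, Finsupp.single_apply, if_neg hef]
    omega
  have h3 : (b - single e 1 - single f 1) + single f 1 = b - single e 1 :=
    tsub_add_cancel_of_le h2
  have h4 : (b - single e 1) + single e 1 = b := tsub_add_cancel_of_le h1
  calc (b - single e 1 - single f 1) + single e 1 + single f 1
      = (b - single e 1 - single f 1) + single f 1 + single e 1 := add_right_comm _ _ _
    _ = b - single e 1 + single e 1 := by rw [h3]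
    _ = b := h4

lemma degf_split {b c : ET m →₀ ℕ} {e f : ET m}
    (h : c + single e 1 + single f 1 = b) : degf c + 2 = degf b := by
  rw [← h, degf_add, degf_add, degf_single, degf_single]

set_option maxHeartbeats 1000000 in
lemma binom_memJ : ∀ (d : ℕ) (a b : ET m →₀ ℕ), degf a ≤ d →
    Adeg (gE m) a = Adeg (gE m) b →
    (monomial a (1:K) - monomial b 1 : MvPolynomial (ET m) K) ∈ Jid K m := by
  classical
  intro d
  induction d with
  | zero =>
    intro a b hd hA
    have ha : a = 0 := degf_eq_zero (Nat.le_zero.mp hd)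
    subst ha
    by_cases hb : b = 0
    · subst hb; simp
    · exfalso
      obtain ⟨e, he⟩ := Finsupp.support_nonempty_iff.mpr hb
      obtain ⟨u, v, huv, hrep⟩ := edge_rep e
      have h1 : Adeg (gE m) b u ≠ 0 :=
        Adeg_pos_of_mem _ b he (by rw [show gE m e = s(u,v) from hrep]; exact Sym2.mem_mk_left u v)
      rw [← hA] at h1
      exact h1 (by rw [show Adeg (gE m) 0 = 0 from Finsupp.sum_zero_index]; rfl)
  | succ d ih =>
    intro a b hd hA
    -- the common-edge step
    have key : ∀ p q : ET m →₀ ℕ, degf p ≤ d + 1 →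
        Adeg (gE m) p = Adeg (gE m) q → (∃ e, 1 ≤ p e ∧ 1 ≤ q e) →
        (monomial p (1:K) - monomial q 1 : MvPolynomial (ET m) K) ∈ Jid K m := by
      intro p q hdp hApq ⟨e, hpe, hqe⟩
      have h1 : (p - single e 1) + single e 1 = p :=
        tsub_add_cancel_of_le (Finsupp.single_le_iff.mpr hpe)
      have h2 : (q - single e 1) + single e 1 = q :=
        tsub_add_cancel_of_le (Finsupp.single_le_iff.mpr hqe)
      have hA' : Adeg (gE m) (p - single e 1) = Adeg (gE m) (q - single e 1) := by
        have h3 := hApq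
        rw [← h1, ← h2, Adeg_add, Adeg_add] at h3
        exact add_right_cancel h3
      have hdeg : degf (p - single e 1) ≤ d := by
        have h4 := degf_add (p - single e 1) (single e 1)
        rw [h1, degf_single] at h4
        omega
      have hfac : (monomial p (1:K) - monomial q 1)
          = X e * (monomial (p - single e 1) 1 - monomial (q - single e 1) 1) := by
        rw [mul_sub, ← monomial_factor hpe, ← monomial_factor hqe]
      rw [hfac]
      exact Ideal.mul_mem_left _ _ (ih _ _ hdeg hA')
    by_cases hab : a = b
    · subst hab; simp
    by_cases hcom : ∃ e, 1 ≤ a e ∧ 1 ≤ b e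
    · exact key a b hd hA hcom
    push_neg at hcom
    have disj : ∀ f : ET m, f ∈ a.support → f ∈ b.support → False := by
      intro f hfa hfb
      have h5 := hcom f (Nat.one_le_iff_ne_zero.mpr (Finsupp.mem_support_iff.mp hfa))
      have h6 := Finsupp.mem_support_iff.mp hfb
      omega
    by_cases ha0 : a = 0
    · exfalso
      have hb0 : b ≠ 0 := fun h => hab (ha0.trans h.symm)
      obtain ⟨e, he⟩ := Finsupp.support_nonempty_iff.mpr hb0
      obtain ⟨u, v, huv, hrep⟩ := edge_rep e
      have h1 : Adeg (gE m) b u ≠ 0 :=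
        Adeg_pos_of_mem _ b he (by rw [show gE m e = s(u,v) from hrep]; exact Sym2.mem_mk_left u v)
      rw [← hA] at h1
      refine h1 ?_
      rw [ha0, show Adeg (gE m) 0 = 0 from Finsupp.sum_zero_index]
      rfl
    obtain ⟨e, he⟩ := Finsupp.support_nonempty_iff.mpr ha0
    obtain ⟨i, j, hij, hrep⟩ := edge_rep e
    -- an edge of b at i
    have hAi : Adeg (gE m) b i ≠ 0 := by
      rw [← hA]
      exact Adeg_pos_of_mem _ a he (by rw [show gE m e = s(i,j) from hrep]; exact Sym2.mem_mk_left i j)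
    obtain ⟨e', he', hie'⟩ := exists_edge_of_Adeg_pos _ b i hAi
    obtain ⟨k, hik, hrep'⟩ := edge_rep_of_mem e' hie'
    have hkj : k ≠ j := by
      intro h
      refine disj e he ?_
      have : e' = e := Subtype.ext (by rw [hrep', hrep, h])
      rwa [← this]
    -- an edge of b at j
    have hAj : Adeg (gE m) b j ≠ 0 := by
      rw [← hA]
      exact Adeg_pos_of_mem _ a he (by rw [show gE m e = s(i,j) from hrep]; exact Sym2.mem_mk_right i j)
    obtain ⟨e'', he'', hje''⟩ := exists_edge_of_Adeg_pos _ b j hAj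
    obtain ⟨l, hjl, hrep''⟩ := edge_rep_of_mem e'' hje''
    have hli : l ≠ i := by
      intro h
      refine disj e he ?_
      have : e'' = e := Subtype.ext (by rw [hrep'', hrep, h]; exact Sym2.eq_swap)
      rwa [← this]
    by_cases hlk : l = k
    · -- `b` contains `x_{ik} x_{jk}` : move on `a`
      subst hlk
      -- an edge of a at l
      have hAl : Adeg (gE m) a l ≠ 0 := by
        rw [hA]
        exact Adeg_pos_of_mem _ b he' (by rw [show gE m e' = s(i,l) from hrep']; exact Sym2.mem_mk_right i l)
      obtain ⟨f, hf, hlf⟩ := exists_edge_of_Adeg_pos _ a l hAl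
      obtain ⟨m', hlm, hrepf⟩ := edge_rep_of_mem f hlf
      have hmi : m' ≠ i := by
        intro h
        refine disj f hf ?_
        have : f = e' := Subtype.ext (by rw [hrepf, hrep', h]; exact Sym2.eq_swap)
        rwa [this]
      have hmj : m' ≠ j := by
        intro h
        refine disj f hf ?_
        have : f = e'' := Subtype.ext (by rw [hrepf, hrep'', h]; exact Sym2.eq_swap)
        rwa [this]
      have hfe : f ≠ e := by
        intro h
        rw [h, hrep] at hrepf
        rcases Sym2.eq_iff.mp hrepf with ⟨h1, h2⟩ | ⟨h1, h2⟩
        · exact hmj h2.symm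
        · exact hkj h2.symm
      -- split a
      set c := a - single e 1 - single f 1 with hcdef
      have hsplit : c + single e 1 + single f 1 = a := by
        have := split_two (b := a) (e := e) (f := f) (fun h => hfe h.symm)
          (Nat.one_le_iff_ne_zero.mpr (Finsupp.mem_support_iff.mp he))
          (Nat.one_le_iff_ne_zero.mpr (Finsupp.mem_support_iff.mp hf))
        calc c + single e 1 + single f 1
            = a - single e 1 - single f 1 + single e 1 + single f 1 := rfl
          _ = a := this
      have hjm : j ≠ m' := fun h => hmj h.symm
      have hil' : i ≠ l := fun h => hli h.symm
      set a' := c + single (ed hil' : ET m) 1 + single (ed hjm : ET m) 1 with ha'def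
      have hAa' : Adeg (gE m) a' = Adeg (gE m) a := by
        rw [ha'def, ← hsplit, Adeg_two, Adeg_two, ed_val, ed_val, hrep, hrepf]
        rw [add_assoc, add_assoc, sig4 i j l m']
      -- quadric step from a to a'
      have hq := quad_mem (K := K) i j l m' hij hil' (fun h => hmi h.symm) hjl hjm hlm
        (ed hil') (ed hjm) e f (ed_val hil') (ed_val hjm) hrep hrepf
      have hmona : monomial a (1:K) = monomial c 1 * (X e * X f) := by
        rw [← hsplit, monomial_two]
      have hmona' : monomial a' (1:K) = monomial c 1 * (X (ed hil' : ET m) * X (ed hjm : ET m)) := by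
        rw [ha'def, monomial_two]
      have T1 : (monomial a (1:K) - monomial a' 1 : MvPolynomial (ET m) K) ∈ Jid K m := by
        have heq : (monomial a (1:K) - monomial a' 1 : MvPolynomial (ET m) K)
            = -(monomial c 1 * (X (ed hil' : ET m) * X (ed hjm : ET m) - X e * X f)) := by
          rw [hmona, hmona']; ring
        rw [heq]
        exact neg_mem (Ideal.mul_mem_left _ _ hq)
      have T2 : (monomial a' (1:K) - monomial b 1 : MvPolynomial (ET m) K) ∈ Jid K m := by
        refine key a' b ?_ (hAa'.trans hA) ⟨ed hil', ?_, ?_⟩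
        · have h6 := degf_split hsplit
          have h7 := degf_split (ha'def ▸ rfl : c + single (ed hil' : ET m) 1 + single (ed hjm : ET m) 1 = a')
          omega
        · rw [ha'def]
          rw [Finsupp.add_apply, Finsupp.add_apply, Finsupp.single_apply, if_pos rfl]
          omega
        · have : e' = (ed hil' : ET m) := Subtype.ext (by rw [ed_val, ← hrep'])
          rw [← this]
          exact Nat.one_le_iff_ne_zero.mpr (Finsupp.mem_support_iff.mp he')
      have heq : (monomial a (1:K) - monomial b 1 : MvPolynomial (ET m) K)
          = (monomial a 1 - monomial a' 1) + (monomial a' 1 - monomial b 1) := by ring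
      rw [heq]
      exact Ideal.add_mem _ T1 T2
    · -- `l ≠ k` : move on `b`, creating the edge `{i,j}`
      have he'e'' : e' ≠ e'' := by
        intro h
        rw [h, hrep''] at hrep'
        rcases Sym2.eq_iff.mp hrep' with ⟨h1, h2⟩ | ⟨h1, h2⟩
        · exact hij h1.symm
        · exact hli h2
      set c := b - single e' 1 - single e'' 1 with hcdef
      have hsplit : c + single e' 1 + single e'' 1 = b := by
        have := split_two (b := b) (e := e') (f := e'') he'e''
          (Nat.one_le_iff_ne_zero.mpr (Finsupp.mem_support_iff.mp he'))
          (Nat.one_le_iff_ne_zero.mpr (Finsupp.mem_support_iff.mp he''))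
        exact this
      have hkl : k ≠ l := fun h => hlk h.symm
      set b' := c + single e 1 + single (ed hkl : ET m) 1 with hb'def
      have hAb' : Adeg (gE m) b' = Adeg (gE m) b := by
        rw [hb'def, ← hsplit, Adeg_two, Adeg_two, ed_val, hrep, hrep', hrep'']
        rw [add_assoc, add_assoc, sig4 i j k l]
      have hq := quad_mem (K := K) i j k l hij hik (fun h => hli h.symm) (fun h => hkj h.symm) hjl hkl
        e' e'' e (ed hkl) hrep' hrep'' hrep (ed_val hkl)
      have hmonb : monomial b (1:K) = monomial c 1 * (X e' * X e'') := by
        rw [← hsplit, monomial_two]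
      have hmonb' : monomial b' (1:K) = monomial c 1 * (X e * X (ed hkl : ET m)) := by
        rw [hb'def, monomial_two]
      have T1 : (monomial b' (1:K) - monomial b 1 : MvPolynomial (ET m) K) ∈ Jid K m := by
        have heq : (monomial b' (1:K) - monomial b 1 : MvPolynomial (ET m) K)
            = -(monomial c 1 * (X e' * X e'' - X e * X (ed hkl : ET m))) := by
          rw [hmonb, hmonb']; ring
        rw [heq]
        exact neg_mem (Ideal.mul_mem_left _ _ hq)
      have T2 : (monomial a (1:K) - monomial b' 1 : MvPolynomial (ET m) K) ∈ Jid K m := by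
        refine key a b' hd (hA.trans hAb'.symm) ⟨e, ?_, ?_⟩
        · exact Nat.one_le_iff_ne_zero.mpr (Finsupp.mem_support_iff.mp he)
        · rw [hb'def]
          rw [Finsupp.add_apply, Finsupp.add_apply, Finsupp.single_apply, if_pos rfl]
          omega
      have heq : (monomial a (1:K) - monomial b 1 : MvPolynomial (ET m) K)
          = (monomial a 1 - monomial b' 1) + (monomial b' 1 - monomial b 1) := by ring
      rw [heq]
      exact Ideal.add_mem _ T2 T1

end ToricAux



namespace ToricAux
open Finsupp SimpleGraph

variable {K : Type} [Field K] {m : ℕ}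

lemma toric_eq_Jid (K : Type) [Field K] (m : ℕ) :
    toricIdeal K (⊤ : SimpleGraph (Fin (m+4))) = Jid K m := by
  apply le_antisymm
  · intro f hf
    rw [toricIdeal, RingHom.mem_ker] at hf
    have hker : (aeval fun e : ET m => edgeMon K (gE m e)) f = 0 := hf
    have h1 := mem_span_binomials (gE m) f.support.card f le_rfl hker
    refine Ideal.span_le.mpr ?_ h1
    rintro p ⟨a, b, hA, rfl⟩
    exact binom_memJ (degf a) a b le_rfl hA
  · rw [Jid, Submodule.add_eq_sup]
    exact sup_le (extIdeal_le_toricIdeal _) (extIdeal_le_toricIdeal _)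

def w3 (m : ℕ) : Fin (m+4) := ⟨3, by omega⟩

noncomputable def psi1 (K : Type) [Field K] (m : ℕ) :
    MvPolynomial (ET m) K →ₐ[K] MvPolynomial (Fin (m+4)) K :=
  aeval (fun e : ET m =>
    if (e : Sym2 (Fin (m+4))) = s(w0 m, wL m) ∨ (e : Sym2 (Fin (m+4))) = s(w1 m, w2 m)
    then 0 else edgeMon K (e : Sym2 (Fin (m+4))))

noncomputable def psi2 (K : Type) [Field K] (m : ℕ) :
    MvPolynomial (ET m) K →ₐ[K] MvPolynomial (Fin (m+4)) K :=
  aeval (fun e : ET m =>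
    if (e : Sym2 (Fin (m+4))) = s(w0 m, w1 m)
    then 0 else edgeMon K (e : Sym2 (Fin (m+4))))

lemma psi1_kills : extIdeal K ⊤ (G1 m) G1_le ≤ RingHom.ker (psi1 K m) := by
  rw [extIdeal, Ideal.map_le_iff_le_comap]
  intro q hq
  rw [toricIdeal, RingHom.mem_ker] at hq
  rw [Ideal.mem_comap, RingHom.mem_ker]
  show (psi1 K m) (MvPolynomial.rename _ q) = 0
  rw [psi1, aeval_rename]
  have hfun : ((fun e : ET m =>
      if (e : Sym2 (Fin (m+4))) = s(w0 m, wL m) ∨ (e : Sym2 (Fin (m+4))) = s(w1 m, w2 m)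
      then 0 else edgeMon K (e : Sym2 (Fin (m+4)))) ∘
        Set.inclusion (SimpleGraph.edgeSet_mono (G1_le (m := m))))
      = fun e : (G1 m).edgeSet => edgeMon K (e : Sym2 (Fin (m+4))) := by
    funext e
    have h2 : (e : Sym2 (Fin (m+4))) ∈ (⊤ : SimpleGraph (Fin (m+4))).edgeSet
        \ {s(w0 m, wL m), s(w1 m, w2 m)} := by
      exact (Set.ext_iff.mp (SimpleGraph.edgeSet_deleteEdges
        (G := (⊤ : SimpleGraph (Fin (m+4)))) {s(w0 m, wL m), s(w1 m, w2 m)}) _).mp e.2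
    have h3 := h2.2
    simp only [Set.mem_insert_iff, Set.mem_singleton_iff] at h3
    push_neg at h3
    show (if (e : Sym2 (Fin (m+4))) = s(w0 m, wL m) ∨ (e : Sym2 (Fin (m+4))) = s(w1 m, w2 m)
      then 0 else edgeMon K (e : Sym2 (Fin (m+4)))) = _
    rw [if_neg (by push_neg; exact h3)]
  rw [hfun]
  exact hq

lemma psi2_kills : extIdeal K ⊤ (G2 m) G2_le ≤ RingHom.ker (psi2 K m) := by
  rw [extIdeal, Ideal.map_le_iff_le_comap]
  intro q hq
  rw [toricIdeal, RingHom.mem_ker] at hq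
  rw [Ideal.mem_comap, RingHom.mem_ker]
  show (psi2 K m) (MvPolynomial.rename _ q) = 0
  rw [psi2, aeval_rename]
  have hfun : ((fun e : ET m =>
      if (e : Sym2 (Fin (m+4))) = s(w0 m, w1 m)
      then 0 else edgeMon K (e : Sym2 (Fin (m+4)))) ∘
        Set.inclusion (SimpleGraph.edgeSet_mono (G2_le (m := m))))
      = fun e : (G2 m).edgeSet => edgeMon K (e : Sym2 (Fin (m+4))) := by
    funext e
    have h2 : (e : Sym2 (Fin (m+4))) ∈ (⊤ : SimpleGraph (Fin (m+4))).edgeSet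
        \ {s(w0 m, w1 m)} := by
      exact (Set.ext_iff.mp (SimpleGraph.edgeSet_deleteEdges
        (G := (⊤ : SimpleGraph (Fin (m+4)))) {s(w0 m, w1 m)}) _).mp e.2
    have h3 := h2.2
    simp only [Set.mem_singleton_iff] at h3
    show (if (e : Sym2 (Fin (m+4))) = s(w0 m, w1 m)
      then 0 else edgeMon K (e : Sym2 (Fin (m+4)))) = _
    rw [if_neg h3]
  rw [hfun]
  exact hq

-- distinctness of the four distinguished vertices
lemma hw01 : w0 m ≠ w1 m := by simp [w0, w1, Fin.ext_iff]
lemma hw02 : w0 m ≠ w2 m := by simp [w0, w2, Fin.ext_iff]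
lemma hw03 : w0 m ≠ w3 m := by simp [w0, w3, Fin.ext_iff]
lemma hw0L : w0 m ≠ wL m := by simp [w0, wL, Fin.ext_iff]
lemma hw12 : w1 m ≠ w2 m := by simp [w1, w2, Fin.ext_iff]
lemma hw13 : w1 m ≠ w3 m := by simp [w1, w3, Fin.ext_iff]
lemma hw1L : w1 m ≠ wL m := by simp [w1, wL, Fin.ext_iff]
lemma hw23 : w2 m ≠ w3 m := by simp [w2, w3, Fin.ext_iff]
lemma hw2L : w2 m ≠ wL m := by simp [w2, wL, Fin.ext_iff]

lemma sym2_ne {α : Type} {a b c d : α} (h1 : a = c → b = d → False)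
    (h2 : a = d → b = c → False) : (s(a,b) : Sym2 α) ≠ s(c,d) := fun h =>
  (Sym2.eq_iff.mp h).elim (fun hx => h1 hx.1 hx.2) (fun hx => h2 hx.1 hx.2)

/-- witness for `I_{G1} ≠ I_G` -/
noncomputable def wit1 (K : Type) [Field K] (m : ℕ) : MvPolynomial (ET m) K :=
  X (ed hw0L) * X (ed hw12) - X (ed hw01) * X (ed hw2L)

/-- witness for `I_{G2} ≠ I_G` -/
noncomputable def wit2 (K : Type) [Field K] (m : ℕ) : MvPolynomial (ET m) K :=
  X (ed hw01) * X (ed hw23) - X (ed hw02) * X (ed hw13)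

lemma wit1_mem : wit1 K m ∈ toricIdeal K (⊤ : SimpleGraph (Fin (m+4))) := by
  rw [toricIdeal, RingHom.mem_ker]
  show (aeval fun e : ET m => edgeMon K (e : Sym2 (Fin (m+4)))) (wit1 K m) = 0
  rw [wit1, map_sub, map_mul, map_mul, aeval_X, aeval_X, aeval_X, aeval_X]
  rw [edgeMon_eq, edgeMon_eq, edgeMon_eq, edgeMon_eq, monomial_mul, monomial_mul, one_mul]
  rw [ed_val, ed_val, ed_val, ed_val, sig_mk, sig_mk, sig_mk, sig_mk]
  rw [show (Finsupp.single (w0 m) 1 + Finsupp.single (wL m) 1)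
        + (Finsupp.single (w1 m) 1 + Finsupp.single (w2 m) 1)
      = (Finsupp.single (w0 m) 1 + Finsupp.single (w1 m) 1)
        + (Finsupp.single (w2 m) 1 + Finsupp.single (wL m) 1) by abel]
  rw [sub_self]

lemma wit2_mem : wit2 K m ∈ toricIdeal K (⊤ : SimpleGraph (Fin (m+4))) := by
  rw [toricIdeal, RingHom.mem_ker]
  show (aeval fun e : ET m => edgeMon K (e : Sym2 (Fin (m+4)))) (wit2 K m) = 0
  rw [wit2, map_sub, map_mul, map_mul, aeval_X, aeval_X, aeval_X, aeval_X]
  rw [edgeMon_eq, edgeMon_eq, edgeMon_eq, edgeMon_eq, monomial_mul, monomial_mul, one_mul]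
  rw [ed_val, ed_val, ed_val, ed_val, sig_mk, sig_mk, sig_mk, sig_mk]
  rw [show (Finsupp.single (w0 m) 1 + Finsupp.single (w1 m) 1)
        + (Finsupp.single (w2 m) 1 + Finsupp.single (w3 m) 1)
      = (Finsupp.single (w0 m) 1 + Finsupp.single (w2 m) 1)
        + (Finsupp.single (w1 m) 1 + Finsupp.single (w3 m) 1) by abel]
  rw [sub_self]

lemma psi1_wit1 : psi1 K m (wit1 K m) ≠ 0 := by
  rw [psi1, wit1, map_sub, map_mul, map_mul, aeval_X, aeval_X, aeval_X, aeval_X]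
  rw [if_pos (Or.inl (ed_val hw0L)), zero_mul]
  rw [if_neg (by
    rw [ed_val]
    push_neg
    exact ⟨sym2_ne (fun _ h => hw1L h) (fun h _ => hw0L h),
      sym2_ne (fun h _ => hw01 h) (fun h _ => hw02 h)⟩)]
  rw [if_neg (by
    rw [ed_val]
    push_neg
    exact ⟨sym2_ne (fun h _ => hw02 h.symm) (fun h _ => hw2L h),
      sym2_ne (fun h _ => hw12 h.symm) (fun _ h => hw1L h.symm)⟩)]
  rw [ed_val, ed_val, edgeMon_eq, edgeMon_eq, monomial_mul, one_mul, zero_sub, neg_ne_zero]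
  intro h
  have := MvPolynomial.monomial_eq_zero.mp h
  exact one_ne_zero this

lemma psi2_wit2 : psi2 K m (wit2 K m) ≠ 0 := by
  rw [psi2, wit2, map_sub, map_mul, map_mul, aeval_X, aeval_X, aeval_X, aeval_X]
  rw [if_pos (ed_val hw01), zero_mul]
  rw [if_neg (by
    rw [ed_val]
    exact sym2_ne (fun _ h => hw12 h.symm) (fun h _ => hw01 h))]
  rw [if_neg (by
    rw [ed_val]
    exact sym2_ne (fun h _ => hw01 h.symm) (fun _ h => hw03 h.symm))]
  rw [ed_val, ed_val, edgeMon_eq, edgeMon_eq, monomial_mul, one_mul, zero_sub, neg_ne_zero]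
  intro h
  have := MvPolynomial.monomial_eq_zero.mp h
  exact one_ne_zero this

lemma ne1 (K : Type) [Field K] (m : ℕ) :
    extIdeal K ⊤ (G1 m) G1_le ≠ toricIdeal K (⊤ : SimpleGraph (Fin (m+4))) := by
  intro hEq
  have hw : wit1 K m ∈ extIdeal K ⊤ (G1 m) G1_le := hEq ▸ wit1_mem
  exact psi1_wit1 (psi1_kills hw)

lemma ne2 (K : Type) [Field K] (m : ℕ) :
    extIdeal K ⊤ (G2 m) G2_le ≠ toricIdeal K (⊤ : SimpleGraph (Fin (m+4))) := by
  intro hEq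
  have hw : wit2 K m ∈ extIdeal K ⊤ (G2 m) G2_le := hEq ▸ wit2_mem
  exact psi2_wit2 (psi2_kills hw)

end ToricAux



namespace ToricAux
open Finsupp SimpleGraph

variable {K : Type} [Field K]

lemma top_edge_rep {V : Type} (e : (⊤ : SimpleGraph V).edgeSet) :
    ∃ u v : V, u ≠ v ∧ (e : Sym2 V) = s(u,v) := by
  obtain ⟨z, hz⟩ := e
  revert hz
  induction z with
  | _ u v =>
    intro hz
    refine ⟨u, v, ?_, rfl⟩
    intro h
    rw [SimpleGraph.mem_edgeSet, h] at hz
    exact (⊤ : SimpleGraph V).irrefl hz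

lemma sig_apply {V : Type} [DecidableEq V] (u v x : V) :
    sig (s(u,v) : Sym2 V) x = (if u = x then 1 else 0) + (if v = x then 1 else 0) := by
  rw [sig_mk, Finsupp.add_apply, Finsupp.single_apply, Finsupp.single_apply]

lemma small_inj (n : ℕ) (hn : n ≤ 3)
    (a b : (⊤ : SimpleGraph (Fin n)).edgeSet →₀ ℕ)
    (hA : Adeg (fun e : (⊤ : SimpleGraph (Fin n)).edgeSet => (e : Sym2 (Fin n))) a
      = Adeg (fun e : (⊤ : SimpleGraph (Fin n)).edgeSet => (e : Sym2 (Fin n))) b) :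
    a = b := by
  interval_cases n
  · ext e
    obtain ⟨u, v, huv, _⟩ := top_edge_rep e
    exact absurd (Subsingleton.elim u v) huv
  · ext e
    obtain ⟨u, v, huv, _⟩ := top_edge_rep e
    exact absurd (Subsingleton.elim u v) huv
  · -- n = 2
    have hall : ∀ u v : Fin 2, u ≠ v → (s(u,v) : Sym2 (Fin 2)) = s(0,1) := by decide
    set e01 : (⊤ : SimpleGraph (Fin 2)).edgeSet := ⟨s(0,1), by simp⟩ with he01
    have huniq : ∀ e : (⊤ : SimpleGraph (Fin 2)).edgeSet, e = e01 := by
      intro e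
      apply Subtype.ext
      obtain ⟨u, v, huv, hrep⟩ := top_edge_rep e
      rw [hrep]
      exact hall u v huv
    have hae : a = single e01 (a e01) := by
      ext f
      rw [huniq f, Finsupp.single_apply, if_pos rfl]
    have hbe : b = single e01 (b e01) := by
      ext f
      rw [huniq f, Finsupp.single_apply, if_pos rfl]
    rw [hae, hbe] at hA
    rw [Adeg_single, Adeg_single] at hA
    have h0 := DFunLike.congr_fun hA (0 : Fin 2)
    rw [Finsupp.smul_apply, Finsupp.smul_apply,
      show ((e01 : Sym2 (Fin 2))) = s(0,1) from rfl, sig_apply, if_pos rfl,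
      if_neg (by decide)] at h0
    have : a e01 = b e01 := by
      simp only [smul_eq_mul] at h0
      omega
    rw [hae, hbe, this]
  · -- n = 3
    have hall : ∀ u v : Fin 3, u ≠ v →
        (s(u,v) : Sym2 (Fin 3)) = s(0,1) ∨ (s(u,v) : Sym2 (Fin 3)) = s(0,2) ∨
          (s(u,v) : Sym2 (Fin 3)) = s(1,2) := by decide
    set e01 : (⊤ : SimpleGraph (Fin 3)).edgeSet := ⟨s(0,1), by simp⟩ with he01
    set e02 : (⊤ : SimpleGraph (Fin 3)).edgeSet := ⟨s(0,2), by simp⟩ with he02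
    set e12 : (⊤ : SimpleGraph (Fin 3)).edgeSet := ⟨s(1,2), by simp⟩ with he12
    have htriple : ∀ e : (⊤ : SimpleGraph (Fin 3)).edgeSet,
        e = e01 ∨ e = e02 ∨ e = e12 := by
      intro e
      obtain ⟨u, v, huv, hrep⟩ := top_edge_rep e
      rcases hall u v huv with h | h | h
      · exact Or.inl (Subtype.ext (hrep.trans h))
      · exact Or.inr (Or.inl (Subtype.ext (hrep.trans h)))
      · exact Or.inr (Or.inr (Subtype.ext (hrep.trans h)))
    have hd1 : e01 ≠ e02 := by
      intro h
      have := congrArg Subtype.val h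
      rw [he01, he02] at this
      exact absurd this (by decide)
    have hd2 : e01 ≠ e12 := by
      intro h
      have := congrArg Subtype.val h
      rw [he01, he12] at this
      exact absurd this (by decide)
    have hd3 : e02 ≠ e12 := by
      intro h
      have := congrArg Subtype.val h
      rw [he02, he12] at this
      exact absurd this (by decide)
    have hdec : ∀ c : (⊤ : SimpleGraph (Fin 3)).edgeSet →₀ ℕ,
        c = single e01 (c e01) + single e02 (c e02) + single e12 (c e12) := by
      intro c
      ext f
      rcases htriple f with rfl | rfl | rfl
      · rw [Finsupp.add_apply, Finsupp.add_apply, Finsupp.single_apply, if_pos rfl,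
          Finsupp.single_apply, if_neg (fun h => hd1 h.symm),
          Finsupp.single_apply, if_neg (fun h => hd2 h.symm)]
        omega
      · rw [Finsupp.add_apply, Finsupp.add_apply, Finsupp.single_apply,
          if_neg hd1, Finsupp.single_apply, if_pos rfl,
          Finsupp.single_apply, if_neg (fun h => hd3 h.symm)]
        omega
      · rw [Finsupp.add_apply, Finsupp.add_apply, Finsupp.single_apply,
          if_neg hd2, Finsupp.single_apply,
          if_neg hd3, Finsupp.single_apply, if_pos rfl]
        omega
    have hAa := hA
    rw [hdec a, hdec b, Adeg_add, Adeg_add, Adeg_add, Adeg_add,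
      Adeg_single, Adeg_single, Adeg_single, Adeg_single, Adeg_single, Adeg_single] at hAa
    have hval : ∀ x : Fin 3,
        a e01 * sig (s(0,1) : Sym2 (Fin 3)) x + a e02 * sig (s(0,2) : Sym2 (Fin 3)) x
          + a e12 * sig (s(1,2) : Sym2 (Fin 3)) x
        = b e01 * sig (s(0,1) : Sym2 (Fin 3)) x + b e02 * sig (s(0,2) : Sym2 (Fin 3)) x
          + b e12 * sig (s(1,2) : Sym2 (Fin 3)) x := by
      intro x
      have hx := DFunLike.congr_fun hAa x
      rw [Finsupp.add_apply, Finsupp.add_apply, Finsupp.add_apply, Finsupp.add_apply,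
        Finsupp.smul_apply, Finsupp.smul_apply, Finsupp.smul_apply,
        Finsupp.smul_apply, Finsupp.smul_apply, Finsupp.smul_apply] at hx
      simpa only [smul_eq_mul] using hx
    have h0 := hval 0
    have h1 := hval 1
    have h2 := hval 2
    rw [sig_apply, sig_apply, sig_apply] at h0 h1 h2
    simp at h0 h1 h2
    have ha01 : a e01 = b e01 := by omega
    have ha02 : a e02 = b e02 := by omega
    have ha12 : a e12 = b e12 := by omega
    rw [hdec a, hdec b, ha01, ha02, ha12]

lemma small_toric_bot (n : ℕ) (hn : n ≤ 3) :
    toricIdeal K (⊤ : SimpleGraph (Fin n)) = ⊥ := by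
  apply le_antisymm _ bot_le
  intro f hf
  rw [toricIdeal, RingHom.mem_ker] at hf
  have hker : (aeval fun e : (⊤ : SimpleGraph (Fin n)).edgeSet =>
      edgeMon K ((fun e : (⊤ : SimpleGraph (Fin n)).edgeSet => (e : Sym2 (Fin n))) e)) f = 0 := hf
  have h1 := mem_span_binomials (fun e : (⊤ : SimpleGraph (Fin n)).edgeSet
    => (e : Sym2 (Fin n))) f.support.card f le_rfl hker
  refine Ideal.span_le.mpr ?_ h1
  rintro p ⟨a, b, hA, rfl⟩
  rw [SetLike.mem_coe, Ideal.mem_bot, small_inj n hn a b hA, sub_self]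

end ToricAux


/-- The toric ideal of the complete graph `K_n` is subgraph splittable
if and only if `n ≥ 4`. -/
theorem completeGraph_subgraphSplittable_iff
    (K : Type) [Field K] (n : ℕ) (hn : 1 ≤ n) :
    SubgraphSplittable K (⊤ : SimpleGraph (Fin n)) ↔ 4 ≤ n := by
  constructor
  · intro h
    by_contra hlt
    push_neg at hlt
    have hbot := ToricAux.small_toric_bot (K := K) n (by omega)
    obtain ⟨G₁, G₂, h₁, h₂, heq, hne1, hne2⟩ := h
    apply hne1
    have hle := ToricAux.extIdeal_le_toricIdeal (K := K) h₁
    rw [hbot] at hle ⊢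
    exact le_bot_iff.mp hle
  · intro h
    obtain ⟨m, rfl⟩ : ∃ m, n = m + 4 := ⟨n - 4, by omega⟩
    refine ⟨ToricAux.G1 m, ToricAux.G2 m, ToricAux.G1_le, ToricAux.G2_le, ?_,
      ToricAux.ne1 K m, ToricAux.ne2 K m⟩
    rw [show extIdeal K ⊤ (ToricAux.G1 m) ToricAux.G1_le +
        extIdeal K ⊤ (ToricAux.G2 m) ToricAux.G2_le = ToricAux.Jid K m from rfl]
    exact ToricAux.toric_eq_Jid K m
end

section
/- Let K be a field, n ≥ 4 an integer, and w = (a, b, c, d) a cycle of length 4 in the complete graph K_n (so a, b, c, d are distinct edges forming a 4-cycle). Then I_{K_n} = I_{K_n∖{a,c}} + I_{K_n∖{b,d}}, and moreover I_{K_n∖{a,c}} ≠ I_{K_n} and I_{K_n∖{b,d}} ≠ I_{K_n}, so this is a subgraph splitting of I_{K_n}. -/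
open MvPolynomial

namespace CGSplit
open MvPolynomial Finsupp

variable {n : ℕ}

abbrev ES (n : ℕ) : Type := ((⊤ : SimpleGraph (Fin n)).edgeSet : Set (Sym2 (Fin n)))

def evar (a b : Fin n) (h : a ≠ b) : ES n := ⟨s(a,b), by simp [h]⟩

@[simp] lemma evar_val (a b : Fin n) (h : a ≠ b) : (evar a b h : Sym2 (Fin n)) = s(a,b) := rfl

noncomputable def sym2deg : Sym2 (Fin n) → (Fin n →₀ ℕ) :=
  Sym2.lift ⟨fun a b => Finsupp.single a 1 + Finsupp.single b 1, fun a b => add_comm _ _⟩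

@[simp] lemma sym2deg_mk (a b : Fin n) :
    sym2deg s(a,b) = Finsupp.single a 1 + Finsupp.single b 1 := rfl

noncomputable def edegHom (n : ℕ) : (ES n →₀ ℕ) →ₗ[ℕ] (Fin n →₀ ℕ) :=
  Finsupp.linearCombination ℕ (fun e : ES n => sym2deg (e : Sym2 (Fin n)))

noncomputable def edeg (u : ES n →₀ ℕ) : Fin n →₀ ℕ := edegHom n u

lemma edeg_add (u v : ES n →₀ ℕ) : edeg (u + v) = edeg u + edeg v := map_add (edegHom n) u v

@[simp] lemma edeg_single (e : ES n) (m : ℕ) :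
    edeg (Finsupp.single e m) = m • sym2deg (e : Sym2 (Fin n)) := by
  simp [edeg, edegHom]

noncomputable def tdegHom (n : ℕ) : (ES n →₀ ℕ) →ₗ[ℕ] ℕ :=
  Finsupp.linearCombination ℕ (fun _ => 1)

noncomputable def tdeg (u : ES n →₀ ℕ) : ℕ := tdegHom n u

lemma tdeg_add (u v : ES n →₀ ℕ) : tdeg (u + v) = tdeg u + tdeg v := map_add (tdegHom n) u v

@[simp] lemma tdeg_single (e : ES n) (m : ℕ) : tdeg (Finsupp.single e m) = m := by
  simp [tdeg, tdegHom]

variable (K : Type) [Field K]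

noncomputable def phi (n : ℕ) : MvPolynomial (ES n) K →ₐ[K] MvPolynomial (Fin n) K :=
  aeval (fun e : ES n => edgeMon K (e : Sym2 (Fin n)))

lemma toric_eq : toricIdeal K (⊤ : SimpleGraph (Fin n)) = RingHom.ker (phi K n) := rfl

lemma edgeMon_eq (e : Sym2 (Fin n)) : edgeMon K e = monomial (sym2deg e) 1 := by
  induction e using Sym2.inductionOn with
  | hf a b =>
    simp only [edgeMon, Sym2.lift_mk, sym2deg_mk]
    rw [X, X, monomial_mul, one_mul]

lemma prod_mon {α : Type} (s : Finset α) (g : α → (Fin n →₀ ℕ)) :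
    (∏ i ∈ s, monomial (g i) (1 : K)) = monomial (∑ i ∈ s, g i) 1 := by
  induction s using Finset.cons_induction with
  | empty => simp
  | cons a s ha ih => rw [Finset.prod_cons, Finset.sum_cons, ih, monomial_mul, one_mul]

lemma phi_monomial (u : ES n →₀ ℕ) : phi K n (monomial u (1 : K)) = monomial (edeg u) 1 := by
  rw [phi, aeval_monomial, map_one, one_mul]
  have h : ∀ e : ES n, ∀ k : ℕ,
      (edgeMon K (e : Sym2 (Fin n)))^k = monomial (k • sym2deg (e : Sym2 (Fin n))) 1 := by
    intro e k; rw [edgeMon_eq, monomial_pow, one_pow]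
  rw [Finsupp.prod]
  simp only [h]
  rw [prod_mon]
  congr 1


lemma aeval_comp_inclusion {V : Type} (G H : SimpleGraph V) (h : H ≤ G) :
    (fun e : G.edgeSet => edgeMon K (e : Sym2 V)) ∘ (Set.inclusion (SimpleGraph.edgeSet_mono h))
      = fun e : H.edgeSet => edgeMon K (e : Sym2 V) := by
  funext e
  simp

lemma extIdeal_le {V : Type} (G H : SimpleGraph V) (h : H ≤ G) :
    extIdeal K G H h ≤ toricIdeal K G := by
  rw [extIdeal, Ideal.map_le_iff_le_comap]
  intro f hf
  rw [Ideal.mem_comap, toricIdeal, RingHom.mem_ker]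
  show aeval _ (rename (Set.inclusion (SimpleGraph.edgeSet_mono h)) f) = 0
  rw [aeval_rename, aeval_comp_inclusion K G H h]
  exact hf

lemma edgeMon_ne_zero {V : Type} (e : Sym2 V) : edgeMon K e ≠ 0 := by
  induction e using Sym2.inductionOn with
  | hf a b =>
    simp only [edgeMon, Sym2.lift_mk]
    exact mul_ne_zero (X_ne_zero a) (X_ne_zero b)

open Classical in
lemma extIdeal_ne {V : Type} (G H : SimpleGraph V) (h : H ≤ G)
    (e1 e2 f1 f2 : G.edgeSet)
    (he1 : (e1 : Sym2 V) ∉ H.edgeSet) (he2 : (e2 : Sym2 V) ∉ H.edgeSet)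
    (hf1 : f1 ≠ e1) (hf1' : f1 ≠ e2) (hf2 : f2 ≠ e1) (hf2' : f2 ≠ e2)
    (hker : X e1 * X e2 - X f1 * X f2 ∈ toricIdeal K G) :
    extIdeal K G H h ≠ toricIdeal K G := by
  intro heq
  set ι := Set.inclusion (SimpleGraph.edgeSet_mono h) with hι
  set ψ : MvPolynomial G.edgeSet K →ₐ[K] MvPolynomial G.edgeSet K :=
    aeval (fun e => if e = e1 ∨ e = e2 then 0 else X e) with hψ
  have hcomp : ψ.comp (rename ι : MvPolynomial H.edgeSet K →ₐ[K] MvPolynomial G.edgeSet K)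
      = rename ι := by
    apply MvPolynomial.algHom_ext
    intro e
    have hmem : ((ι e : G.edgeSet) : Sym2 V) ∈ H.edgeSet := by
      rw [hι, Set.coe_inclusion]; exact e.2
    simp only [AlgHom.comp_apply, rename_X, hψ, aeval_X]
    rw [if_neg]
    push_neg
    exact ⟨fun hc => he1 (hc ▸ hmem), fun hc => he2 (hc ▸ hmem)⟩
  have hBmem : X e1 * X e2 - X f1 * X f2 ∈ extIdeal K G H h := heq.symm ▸ hker
  have hψB : ψ (X e1 * X e2 - X f1 * X f2) ∈ extIdeal K G H h := by
    rw [extIdeal] at hBmem ⊢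
    have := Ideal.mem_map_of_mem (f := ψ) hBmem
    rwa [Ideal.map_mapₐ, hcomp] at this
  have hψBval : ψ (X e1 * X e2 - X f1 * X f2) = -(X f1 * X f2) := by
    simp only [hψ, map_sub, map_mul, aeval_X]
    simp [hf1, hf1', hf2, hf2']
  rw [hψBval] at hψB
  have := extIdeal_le K G H h hψB
  rw [toricIdeal, RingHom.mem_ker] at this
  simp only [map_neg, map_mul, aeval_X, neg_eq_zero] at this
  exact mul_ne_zero (edgeMon_ne_zero K _) (edgeMon_ne_zero K _) this


lemma pairBinomial_mem_ext (G' : SimpleGraph (Fin n)) (hle : G' ≤ ⊤)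
    (b1 b2 b3 b4 : Fin n)
    (hn12 : b1 ≠ b2) (hn34 : b3 ≠ b4) (hn13 : b1 ≠ b3) (hn24 : b2 ≠ b4)
    (h12 : s(b1,b2) ∈ G'.edgeSet) (h34 : s(b3,b4) ∈ G'.edgeSet)
    (h13 : s(b1,b3) ∈ G'.edgeSet) (h24 : s(b2,b4) ∈ G'.edgeSet) :
    (X (evar b1 b2 hn12) * X (evar b3 b4 hn34) - X (evar b1 b3 hn13) * X (evar b2 b4 hn24) :
      MvPolynomial (ES n) K) ∈ extIdeal K ⊤ G' hle := by
  have hP : (X (⟨s(b1,b2), h12⟩ : G'.edgeSet) * X ⟨s(b3,b4), h34⟩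
      - X ⟨s(b1,b3), h13⟩ * X ⟨s(b2,b4), h24⟩ : MvPolynomial G'.edgeSet K)
      ∈ toricIdeal K G' := by
    rw [toricIdeal, RingHom.mem_ker]
    simp only [map_sub, map_mul, aeval_X, edgeMon, Sym2.lift_mk]
    ring
  have := Ideal.mem_map_of_mem
    (rename (Set.inclusion (SimpleGraph.edgeSet_mono hle)) :
      MvPolynomial G'.edgeSet K →ₐ[K] MvPolynomial (ES n) K) hP
  rw [map_sub, map_mul, map_mul, rename_X, rename_X, rename_X, rename_X] at this
  exact this


lemma evar_swap (a b : Fin n) (h : a ≠ b) : evar a b h = evar b a h.symm :=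
  Subtype.ext (Sym2.eq_swap)

section PQRT

variable (p q r t : Fin n)

lemma bad1_shared (hpq : p ≠ q) (hpr : p ≠ r) (hpt : p ≠ t)
    (hqr : q ≠ r) (hqt : q ≠ t) (hrt : r ≠ t)
    (a b c : Fin n) (hbc : b ≠ c)
    (h1 : s(a,b) = s(p,q) ∨ s(a,b) = s(r,t)) (h2 : s(a,c) = s(p,q) ∨ s(a,c) = s(r,t)) :
    False := by
  simp only [Sym2.eq_iff] at h1 h2
  rcases h1 with (⟨rfl,rfl⟩|⟨rfl,rfl⟩)|(⟨rfl,rfl⟩|⟨rfl,rfl⟩) <;>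
    rcases h2 with (⟨h,rfl⟩|⟨h,rfl⟩)|(⟨h,rfl⟩|⟨h,rfl⟩) <;> simp_all

lemma bad_disj (hpq : p ≠ q) (hpr : p ≠ r) (hpt : p ≠ t)
    (hqr : q ≠ r) (hqt : q ≠ t) (hrt : r ≠ t)
    (a b c d : Fin n) (hca : c ≠ a) (hcb : c ≠ b) (hda : d ≠ a) (hdb : d ≠ b)
    (h1 : s(a,b) = s(p,q) ∨ s(a,b) = s(r,t)) (h2 : s(c,d) = s(q,r) ∨ s(c,d) = s(t,p)) :
    False := by
  simp only [Sym2.eq_iff] at h1 h2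
  rcases h1 with (⟨rfl,rfl⟩|⟨rfl,rfl⟩)|(⟨rfl,rfl⟩|⟨rfl,rfl⟩) <;>
    rcases h2 with (⟨rfl,rfl⟩|⟨rfl,rfl⟩)|(⟨rfl,rfl⟩|⟨rfl,rfl⟩) <;> simp_all

lemma bad12_same (hpq : p ≠ q) (hpr : p ≠ r) (hpt : p ≠ t)
    (hqr : q ≠ r) (hqt : q ≠ t) (hrt : r ≠ t) (e : Sym2 (Fin n))
    (h1 : e = s(p,q) ∨ e = s(r,t)) (h2 : e = s(q,r) ∨ e = s(t,p)) : False := by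
  rcases h1 with rfl|rfl <;> rcases h2 with h|h <;> rw [Sym2.eq_iff] at h <;>
    rcases h with ⟨h1,h2⟩|⟨h1,h2⟩ <;> simp_all


variable {p q r t}

noncomputable def Jid (p q r t : Fin n) : Ideal (MvPolynomial (ES n) K) :=
  extIdeal K ⊤ ((⊤ : SimpleGraph (Fin n)).deleteEdges {s(p,q), s(r,t)})
      (SimpleGraph.deleteEdges_le _)
  + extIdeal K ⊤ ((⊤ : SimpleGraph (Fin n)).deleteEdges {s(q,r), s(t,p)})
      (SimpleGraph.deleteEdges_le _)

lemma mem_del (F : Set (Sym2 (Fin n))) {a b : Fin n} (hab : a ≠ b) (hF : s(a,b) ∉ F) :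
    s(a,b) ∈ ((⊤ : SimpleGraph (Fin n)).deleteEdges F).edgeSet := by
  rw [SimpleGraph.edgeSet_deleteEdges]
  exact ⟨by simp [hab], hF⟩

lemma mem_pair_iff {x e1 e2 : Sym2 (Fin n)} : x ∈ ({e1, e2} : Set (Sym2 (Fin n))) ↔ x = e1 ∨ x = e2 := by
  simp

lemma mem_J1 (b1 b2 b3 b4 : Fin n)
    (hn12 : b1 ≠ b2) (hn34 : b3 ≠ b4) (hn13 : b1 ≠ b3) (hn24 : b2 ≠ b4)
    (nb12 : ¬(s(b1,b2) = s(p,q) ∨ s(b1,b2) = s(r,t)))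
    (nb34 : ¬(s(b3,b4) = s(p,q) ∨ s(b3,b4) = s(r,t)))
    (nb13 : ¬(s(b1,b3) = s(p,q) ∨ s(b1,b3) = s(r,t)))
    (nb24 : ¬(s(b2,b4) = s(p,q) ∨ s(b2,b4) = s(r,t))) :
    (X (evar b1 b2 hn12) * X (evar b3 b4 hn34) - X (evar b1 b3 hn13) * X (evar b2 b4 hn24) :
      MvPolynomial (ES n) K) ∈ Jid K p q r t := by
  rw [Jid, Submodule.add_eq_sup]
  exact Submodule.mem_sup_left (pairBinomial_mem_ext K _ _ b1 b2 b3 b4 hn12 hn34 hn13 hn24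
    (mem_del _ hn12 (mem_pair_iff.not.mpr nb12))
    (mem_del _ hn34 (mem_pair_iff.not.mpr nb34))
    (mem_del _ hn13 (mem_pair_iff.not.mpr nb13))
    (mem_del _ hn24 (mem_pair_iff.not.mpr nb24)))

lemma mem_J2 (b1 b2 b3 b4 : Fin n)
    (hn12 : b1 ≠ b2) (hn34 : b3 ≠ b4) (hn13 : b1 ≠ b3) (hn24 : b2 ≠ b4)
    (nb12 : ¬(s(b1,b2) = s(q,r) ∨ s(b1,b2) = s(t,p)))
    (nb34 : ¬(s(b3,b4) = s(q,r) ∨ s(b3,b4) = s(t,p)))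
    (nb13 : ¬(s(b1,b3) = s(q,r) ∨ s(b1,b3) = s(t,p)))
    (nb24 : ¬(s(b2,b4) = s(q,r) ∨ s(b2,b4) = s(t,p))) :
    (X (evar b1 b2 hn12) * X (evar b3 b4 hn34) - X (evar b1 b3 hn13) * X (evar b2 b4 hn24) :
      MvPolynomial (ES n) K) ∈ Jid K p q r t := by
  rw [Jid, Submodule.add_eq_sup]
  exact Submodule.mem_sup_right (pairBinomial_mem_ext K _ _ b1 b2 b3 b4 hn12 hn34 hn13 hn24
    (mem_del _ hn12 (mem_pair_iff.not.mpr nb12))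
    (mem_del _ hn34 (mem_pair_iff.not.mpr nb34))
    (mem_del _ hn13 (mem_pair_iff.not.mpr nb13))
    (mem_del _ hn24 (mem_pair_iff.not.mpr nb24)))


lemma lemC_mixed (hpq : p ≠ q) (hpr : p ≠ r) (hpt : p ≠ t)
    (hqr : q ≠ r) (hqt : q ≠ t) (hrt : r ≠ t)
    (b1 b2 b3 b4 : Fin n)
    (h12 : b1 ≠ b2) (h13 : b1 ≠ b3) (h14 : b1 ≠ b4)
    (h23 : b2 ≠ b3) (h24 : b2 ≠ b4) (h34 : b3 ≠ b4)
    (A1 : (s(b1,b2) = s(p,q) ∨ s(b1,b2) = s(r,t)) ∨ (s(b3,b4) = s(p,q) ∨ s(b3,b4) = s(r,t)))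
    (B2 : (s(b1,b3) = s(q,r) ∨ s(b1,b3) = s(t,p)) ∨ (s(b2,b4) = s(q,r) ∨ s(b2,b4) = s(t,p))) :
    (X (evar b1 b2 h12) * X (evar b3 b4 h34) - X (evar b1 b3 h13) * X (evar b2 b4 h24) :
      MvPolynomial (ES n) K) ∈ Jid K p q r t := by
  have B2sh := bad1_shared q r t p hqr hqt hpq.symm hrt hpr.symm hpt.symm
  have B1sh := bad1_shared p q r t hpq hpr hpt hqr hqt hrt
  have Dsj := bad_disj p q r t hpq hpr hpt hqr hqt hrt
  have Sm := bad12_same p q r t hpq hpr hpt hqr hqt hrt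
  have nb2_12 : ¬(s(b1,b2) = s(q,r) ∨ s(b1,b2) = s(t,p)) := by
    intro hb
    rcases A1 with h|h
    · exact Sm _ h hb
    · exact Dsj b3 b4 b1 b2 h13 h14 h23 h24 h hb
  have nb2_34 : ¬(s(b3,b4) = s(q,r) ∨ s(b3,b4) = s(t,p)) := by
    intro hb
    rcases A1 with h|h
    · exact Dsj b1 b2 b3 b4 h13.symm h23.symm h14.symm h24.symm h hb
    · exact Sm _ h hb
  have nb2_14 : ¬(s(b1,b4) = s(q,r) ∨ s(b1,b4) = s(t,p)) := by
    intro hb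
    rcases B2 with h|h
    · exact B2sh b1 b4 b3 h34.symm hb h
    · rw [show s(b1,b4) = s(b4,b1) from Sym2.eq_swap] at hb
      rw [show s(b2,b4) = s(b4,b2) from Sym2.eq_swap] at h
      exact B2sh b4 b1 b2 h12 hb h
  have nb2_23 : ¬(s(b2,b3) = s(q,r) ∨ s(b2,b3) = s(t,p)) := by
    intro hb
    rcases B2 with h|h
    · rw [show s(b2,b3) = s(b3,b2) from Sym2.eq_swap] at hb
      rw [show s(b1,b3) = s(b3,b1) from Sym2.eq_swap] at h
      exact B2sh b3 b2 b1 h12.symm hb h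
    · exact B2sh b2 b3 b4 h34 hb h
  have nb1_13 : ¬(s(b1,b3) = s(p,q) ∨ s(b1,b3) = s(r,t)) := by
    intro hb
    rcases A1 with h|h
    · exact B1sh b1 b2 b3 h23 h hb
    · rw [show s(b1,b3) = s(b3,b1) from Sym2.eq_swap] at hb
      exact B1sh b3 b4 b1 h14.symm h hb
  have nb1_24 : ¬(s(b2,b4) = s(p,q) ∨ s(b2,b4) = s(r,t)) := by
    intro hb
    rcases A1 with h|h
    · rw [show s(b1,b2) = s(b2,b1) from Sym2.eq_swap] at h
      exact B1sh b2 b1 b4 h14 h hb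
    · rw [show s(b3,b4) = s(b4,b3) from Sym2.eq_swap] at h
      rw [show s(b2,b4) = s(b4,b2) from Sym2.eq_swap] at hb
      exact B1sh b4 b3 b2 h23.symm h hb
  have nb1_14 : ¬(s(b1,b4) = s(p,q) ∨ s(b1,b4) = s(r,t)) := by
    intro hb
    rcases A1 with h|h
    · exact B1sh b1 b2 b4 h24 h hb
    · rw [show s(b3,b4) = s(b4,b3) from Sym2.eq_swap] at h
      rw [show s(b1,b4) = s(b4,b1) from Sym2.eq_swap] at hb
      exact B1sh b4 b3 b1 h13.symm h hb
  have nb1_23 : ¬(s(b2,b3) = s(p,q) ∨ s(b2,b3) = s(r,t)) := by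
    intro hb
    rcases A1 with h|h
    · rw [show s(b1,b2) = s(b2,b1) from Sym2.eq_swap] at h
      exact B1sh b2 b1 b3 h13 h hb
    · rw [show s(b2,b3) = s(b3,b2) from Sym2.eq_swap] at hb
      exact B1sh b3 b4 b2 h24.symm h hb
  have m1 := mem_J2 (K := K) (p := p) (q := q) (r := r) (t := t)
    b1 b2 b4 b3 h12 h34.symm h14 h23 nb2_12
    (by rw [show s(b4,b3) = s(b3,b4) from Sym2.eq_swap]; exact nb2_34) nb2_14 nb2_23
  rw [evar_swap b4 b3] at m1
  have m2 := mem_J1 (K := K) (p := p) (q := q) (r := r) (t := t)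
    b1 b4 b3 b2 h14 h23.symm h13 h24.symm nb1_14
    (by rw [show s(b3,b2) = s(b2,b3) from Sym2.eq_swap]; exact nb1_23) nb1_13
    (by rw [show s(b4,b2) = s(b2,b4) from Sym2.eq_swap]; exact nb1_24)
  rw [evar_swap b3 b2, evar_swap b4 b2] at m2
  have hsum := Ideal.add_mem _ m1 m2
  rw [sub_add_sub_cancel] at hsum
  exact hsum

lemma lemC (hpq : p ≠ q) (hpr : p ≠ r) (hpt : p ≠ t)
    (hqr : q ≠ r) (hqt : q ≠ t) (hrt : r ≠ t)
    (b1 b2 b3 b4 : Fin n)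
    (h12 : b1 ≠ b2) (h13 : b1 ≠ b3) (h14 : b1 ≠ b4)
    (h23 : b2 ≠ b3) (h24 : b2 ≠ b4) (h34 : b3 ≠ b4) :
    (X (evar b1 b2 h12) * X (evar b3 b4 h34) - X (evar b1 b3 h13) * X (evar b2 b4 h24) :
      MvPolynomial (ES n) K) ∈ Jid K p q r t := by
  have Dsj := bad_disj p q r t hpq hpr hpt hqr hqt hrt
  have Sm := bad12_same p q r t hpq hpr hpt hqr hqt hrt
  by_cases A1 : (s(b1,b2) = s(p,q) ∨ s(b1,b2) = s(r,t)) ∨ (s(b3,b4) = s(p,q) ∨ s(b3,b4) = s(r,t))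
  · by_cases B2 : (s(b1,b3) = s(q,r) ∨ s(b1,b3) = s(t,p)) ∨ (s(b2,b4) = s(q,r) ∨ s(b2,b4) = s(t,p))
    · exact lemC_mixed K hpq hpr hpt hqr hqt hrt b1 b2 b3 b4 h12 h13 h14 h23 h24 h34 A1 B2
    · by_cases B1 : (s(b1,b2) = s(q,r) ∨ s(b1,b2) = s(t,p)) ∨ (s(b3,b4) = s(q,r) ∨ s(b3,b4) = s(t,p))
      · exfalso
        rcases A1 with h|h <;> rcases B1 with h'|h'
        · exact Sm _ h h'
        · exact Dsj b1 b2 b3 b4 h13.symm h23.symm h14.symm h24.symm h h'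
        · exact Dsj b3 b4 b1 b2 h13 h14 h23 h24 h h'
        · exact Sm _ h h'
      · rw [not_or] at B1 B2
        exact mem_J2 K b1 b2 b3 b4 h12 h34 h13 h24 B1.1 B1.2 B2.1 B2.2
  · by_cases A2 : (s(b1,b3) = s(p,q) ∨ s(b1,b3) = s(r,t)) ∨ (s(b2,b4) = s(p,q) ∨ s(b2,b4) = s(r,t))
    · by_cases B1 : (s(b1,b2) = s(q,r) ∨ s(b1,b2) = s(t,p)) ∨ (s(b3,b4) = s(q,r) ∨ s(b3,b4) = s(t,p))
      · have m := lemC_mixed (K := K) hpq hpr hpt hqr hqt hrt b1 b3 b2 b4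
          h13 h12 h14 h23.symm h34 h24 A2 B1
        have hneg := (Jid K p q r t).neg_mem m
        rw [neg_sub] at hneg
        exact hneg
      · by_cases B2 : (s(b1,b3) = s(q,r) ∨ s(b1,b3) = s(t,p)) ∨ (s(b2,b4) = s(q,r) ∨ s(b2,b4) = s(t,p))
        · exfalso
          rcases A2 with h|h <;> rcases B2 with h'|h'
          · exact Sm _ h h'
          · exact Dsj b1 b3 b2 b4 h12.symm h23 h14.symm h34.symm h h'
          · exact Dsj b2 b4 b1 b3 h12 h14 h23.symm h34 h h'
          · exact Sm _ h h'
        · rw [not_or] at B1 B2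
          exact mem_J2 K b1 b2 b3 b4 h12 h34 h13 h24 B1.1 B1.2 B2.1 B2.2
    · rw [not_or] at A1 A2
      exact mem_J1 K b1 b2 b3 b4 h12 h34 h13 h24 A1.1 A1.2 A2.1 A2.2

end PQRT

-- helpers for lemma B
lemma sym2_ex (z : Sym2 (Fin n)) : ∃ a b, z = s(a,b) := by
  induction z using Sym2.inductionOn with
  | hf a b => exact ⟨a, b, rfl⟩

lemma edge_ne {w x : Fin n} (e : ES n) (hex : (e : Sym2 (Fin n)) = s(w,x)) : w ≠ x := by
  have h2 := e.2
  rw [hex] at h2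
  simpa using h2

lemma sym2deg_apply_zero {z : Sym2 (Fin n)} {w : Fin n} (hw : w ∉ z) : sym2deg z w = 0 := by
  obtain ⟨a, b, rfl⟩ := sym2_ex z
  rw [Sym2.mem_iff] at hw
  push_neg at hw
  simp [Finsupp.single_apply, Ne.symm hw.1, Ne.symm hw.2]

lemma sym2deg_apply_pos {z : Sym2 (Fin n)} {w : Fin n} (hw : w ∈ z) : 1 ≤ sym2deg z w := by
  obtain ⟨a, b, rfl⟩ := sym2_ex z
  rw [Sym2.mem_iff] at hw
  rcases hw with rfl|rfl <;> simp [Finsupp.single_apply] <;> omega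

lemma edeg_apply (u : ES n →₀ ℕ) (w : Fin n) :
    edeg u w = ∑ e ∈ u.support, u e * sym2deg (e : Sym2 (Fin n)) w := by
  simp only [edeg, edegHom]
  rw [Finsupp.linearCombination_apply, Finsupp.sum, Finsupp.finset_sum_apply]
  refine Finset.sum_congr rfl fun e _ => ?_
  simp [Finsupp.smul_apply]

lemma exists_edge (u : ES n →₀ ℕ) (w : Fin n) (h : edeg u w ≠ 0) :
    ∃ e ∈ u.support, w ∈ (e : Sym2 (Fin n)) := by
  by_contra hc
  push_neg at hc
  apply h
  rw [edeg_apply]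
  exact Finset.sum_eq_zero fun e he => by rw [sym2deg_apply_zero (hc e he), mul_zero]

lemma edeg_pos (u : ES n →₀ ℕ) (e : ES n) (he : e ∈ u.support) (w : Fin n)
    (hw : w ∈ (e : Sym2 (Fin n))) : edeg u w ≠ 0 := by
  rw [edeg_apply]
  have h1 : 1 ≤ u e := Nat.one_le_iff_ne_zero.mpr (Finsupp.mem_support_iff.mp he)
  have h2 : 1 ≤ u e * sym2deg (e : Sym2 (Fin n)) w :=
    Nat.one_le_iff_ne_zero.mpr (Nat.mul_ne_zero (by omega)
      (Nat.one_le_iff_ne_zero.mp (sym2deg_apply_pos hw)))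
  have h3 := Finset.single_le_sum (f := fun e => u e * sym2deg (e : Sym2 (Fin n)) w)
    (fun i _ => Nat.zero_le _) he
  exact Nat.one_le_iff_ne_zero.mp (le_trans h2 h3)

lemma edeg_eq_zero {u : ES n →₀ ℕ} (h : edeg u = 0) : u = 0 := by
  by_contra hu
  obtain ⟨e, he⟩ := Finsupp.support_nonempty_iff.mpr hu
  obtain ⟨a, b, hab⟩ := sym2_ex (e : Sym2 (Fin n))
  have := edeg_pos u e he a (by rw [hab]; exact Sym2.mem_mk_left a b)
  rw [h] at this
  simp at this

lemma decomp (u : ES n →₀ ℕ) (e : ES n) (he : e ∈ u.support) :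
    ∃ u', u = u' + Finsupp.single e 1 := by
  have hle : Finsupp.single e 1 ≤ u := by
    rw [Finsupp.single_le_iff]
    exact Nat.one_le_iff_ne_zero.mpr (Finsupp.mem_support_iff.mp he)
  obtain ⟨c, hc⟩ := le_iff_exists_add.mp hle
  exact ⟨c, by rw [hc, add_comm]⟩

lemma decomp2 (u : ES n →₀ ℕ) (e f : ES n) (hef : e ≠ f)
    (he : e ∈ u.support) (hf : f ∈ u.support) :
    ∃ u', u = u' + Finsupp.single e 1 + Finsupp.single f 1 := by
  have hle : Finsupp.single e 1 + Finsupp.single f 1 ≤ u := by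
    rw [Finsupp.le_def]
    intro a
    simp only [Finsupp.coe_add, Pi.add_apply, Finsupp.single_apply]
    have h1 := Nat.one_le_iff_ne_zero.mpr (Finsupp.mem_support_iff.mp he)
    have h2 := Nat.one_le_iff_ne_zero.mpr (Finsupp.mem_support_iff.mp hf)
    by_cases hea : e = a <;> by_cases hfa : f = a <;> simp_all
  obtain ⟨c, hc⟩ := le_iff_exists_add.mp hle
  exact ⟨c, by rw [hc]; abel⟩

lemma monomial_two (rest : ES n →₀ ℕ) (g1 g2 : ES n) :
    monomial (rest + Finsupp.single g1 1 + Finsupp.single g2 1) (1:K)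
      = monomial rest 1 * (X g1 * X g2) := by
  rw [show (X g1 : MvPolynomial (ES n) K) = monomial (Finsupp.single g1 1) 1 from rfl,
    show (X g2 : MvPolynomial (ES n) K) = monomial (Finsupp.single g2 1) 1 from rfl,
    monomial_mul, monomial_mul, one_mul, mul_one, add_assoc]

lemma monomial_one (rest : ES n →₀ ℕ) (g1 : ES n) :
    monomial (rest + Finsupp.single g1 1) (1:K) = X g1 * monomial rest 1 := by
  rw [show (X g1 : MvPolynomial (ES n) K) = monomial (Finsupp.single g1 1) 1 from rfl,
    monomial_mul, one_mul, add_comm]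

lemma swap_mem (JI : Ideal (MvPolynomial (ES n) K)) (rest : ES n →₀ ℕ) (e1 e2 f1 f2 : ES n)
    (hD : (X e1 * X e2 - X f1 * X f2 : MvPolynomial (ES n) K) ∈ JI) :
    monomial (rest + Finsupp.single e1 1 + Finsupp.single e2 1) (1:K)
      - monomial (rest + Finsupp.single f1 1 + Finsupp.single f2 1) 1 ∈ JI := by
  rw [monomial_two, monomial_two, ← mul_sub]
  exact Ideal.mul_mem_left _ _ hD


section LemB
variable {p q r t : Fin n}

lemma lemB (hpq : p ≠ q) (hpr : p ≠ r) (hpt : p ≠ t)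
    (hqr : q ≠ r) (hqt : q ≠ t) (hrt : r ≠ t) :
    ∀ N (u v : ES n →₀ ℕ), tdeg u = N → edeg u = edeg v →
      (monomial u (1:K) - monomial v 1) ∈ Jid K p q r t := by
  intro N
  induction N using Nat.strong_induction_on with
  | _ N IH =>
  intro u v htd hdeg
  by_cases huv : u = v
  · rw [huv, sub_self]; exact zero_mem _
  by_cases hcom : ∃ e, e ∈ u.support ∧ e ∈ v.support
  · obtain ⟨e, heu, hev⟩ := hcom
    obtain ⟨u', hu'⟩ := decomp u e heu
    obtain ⟨v', hv'⟩ := decomp v e hev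
    have hdeg' : edeg u' = edeg v' := by
      rw [hu', hv', edeg_add, edeg_add] at hdeg
      exact add_right_cancel hdeg
    have hM : tdeg u' < N := by
      rw [← htd, hu', tdeg_add, tdeg_single]; omega
    have hrec := IH _ hM u' v' rfl hdeg'
    rw [hu', hv', monomial_one, monomial_one, ← mul_sub]
    exact Ideal.mul_mem_left _ _ hrec
  · push_neg at hcom
    rcases eq_or_ne u 0 with rfl|hu0
    · exact absurd (edeg_eq_zero (by rw [← hdeg]; simp [edeg, edegHom])).symm huv
    rcases eq_or_ne v 0 with rfl|hv0
    · exact absurd (edeg_eq_zero (by rw [hdeg]; simp [edeg, edegHom])) huv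
    obtain ⟨e, heu⟩ := Finsupp.support_nonempty_iff.mpr hu0
    obtain ⟨w, x, hex⟩ := sym2_ex (e : Sym2 (Fin n))
    have hwx : w ≠ x := edge_ne e hex
    have hdw : edeg v w ≠ 0 := by
      rw [← hdeg]; exact edeg_pos u e heu w (by rw [hex]; exact Sym2.mem_mk_left w x)
    obtain ⟨f, hfv, hwf⟩ := exists_edge v w hdw
    obtain ⟨y, hfy⟩ := Sym2.mem_iff_exists.mp hwf
    have hwy : w ≠ y := edge_ne f hfy
    have hfe : f ≠ e := fun hc => hcom e heu (hc ▸ hfv)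
    have hyx : y ≠ x := by
      intro h; apply hfe; apply Subtype.ext; rw [hfy, hex, h]
    have hdy : edeg u y ≠ 0 := by
      rw [hdeg]; exact edeg_pos v f hfv y (by rw [hfy]; exact Sym2.mem_mk_right w y)
    obtain ⟨d, hdu, hyd⟩ := exists_edge u y hdy
    obtain ⟨z', hdz⟩ := Sym2.mem_iff_exists.mp hyd
    have hyz' : y ≠ z' := edge_ne d hdz
    have hz'w : z' ≠ w := by
      intro h
      apply hcom d hdu
      have hdf : d = f := Subtype.ext (by rw [hdz, hfy, h, Sym2.eq_swap])
      rw [hdf]; exact hfv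
    by_cases hz'x : z' = x
    · -- swap inside v
      have hdx2 : (d : Sym2 (Fin n)) = s(y,x) := by rw [hdz, hz'x]
      have hdx : edeg v x ≠ 0 := by
        rw [← hdeg]; exact edeg_pos u e heu x (by rw [hex]; exact Sym2.mem_mk_right w x)
      obtain ⟨g, hgv, hxg⟩ := exists_edge v x hdx
      obtain ⟨z, hgz⟩ := Sym2.mem_iff_exists.mp hxg
      have hxz : x ≠ z := edge_ne g hgz
      have hzw : z ≠ w := by
        intro h
        apply hcom e heu
        have hge : g = e := Subtype.ext (by rw [hgz, hex, h, Sym2.eq_swap])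
        rw [← hge]; exact hgv
      have hzy : z ≠ y := by
        intro h
        apply hcom d hdu
        have hgd : g = d := Subtype.ext (by rw [hgz, hdx2, h, Sym2.eq_swap])
        rw [← hgd]; exact hgv
      have hgf : g ≠ f := by
        intro h
        rw [h, hfy] at hgz
        rw [Sym2.eq_iff] at hgz
        rcases hgz with ⟨h1, h2⟩|⟨h1, h2⟩
        · exact hwx h1
        · exact hzw h1.symm
      have he_evar : e = evar w x hwx := Subtype.ext hex
      have hf_evar : f = evar w y hwy := Subtype.ext hfy
      have hg_evar : g = evar x z hxz := Subtype.ext hgz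
      obtain ⟨v'', hv''⟩ := decomp2 v f g hgf.symm hfv hgv
      have hD := lemC K hpq hpr hpt hqr hqt hrt w y x z hwy hwx hzw.symm hyx hzy.symm hxz
      have hswap := swap_mem K (Jid K p q r t) v'' f g (evar w x hwx) (evar y z hzy.symm)
        (by rw [hf_evar, hg_evar]; exact hD)
      obtain ⟨u', hu'⟩ := decomp u e heu
      have hv2 : v'' + Finsupp.single (evar w x hwx) 1 + Finsupp.single (evar y z hzy.symm) 1
          = (v'' + Finsupp.single (evar y z hzy.symm) 1) + Finsupp.single e 1 := by
        rw [he_evar]; abel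
      have hdeg2 : edeg ((v'' + Finsupp.single (evar y z hzy.symm) 1) + Finsupp.single e 1)
          = edeg v := by
        rw [hv'', ← hv2]
        simp only [edeg_add, edeg_single, one_smul, evar_val, hfy, hgz, sym2deg_mk]
        abel
      have hdeg' : edeg u' = edeg (v'' + Finsupp.single (evar y z hzy.symm) 1) := by
        have h1 : edeg (u' + Finsupp.single e 1)
            = edeg ((v'' + Finsupp.single (evar y z hzy.symm) 1) + Finsupp.single e 1) := by
          rw [← hu', hdeg, hdeg2]
        simp only [edeg_add] at h1
        rw [edeg_add]
        exact add_right_cancel h1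
      have hM : tdeg u' < N := by
        rw [← htd, hu', tdeg_add, tdeg_single]; omega
      have hrec := IH _ hM u' (v'' + Finsupp.single (evar y z hzy.symm) 1) rfl hdeg'
      have hmu : monomial u (1:K) = X e * monomial u' 1 := by rw [hu', monomial_one]
      have hmv2 : monomial (v'' + Finsupp.single (evar w x hwx) 1
            + Finsupp.single (evar y z hzy.symm) 1) (1:K)
          = X e * monomial (v'' + Finsupp.single (evar y z hzy.symm) 1) 1 := by
        rw [hv2, monomial_one]
      have final : monomial u (1:K) - monomial v 1
          = X e * (monomial u' 1 - monomial (v'' + Finsupp.single (evar y z hzy.symm) 1) 1)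
            - (monomial v 1 - monomial (v'' + Finsupp.single (evar w x hwx) 1
                + Finsupp.single (evar y z hzy.symm) 1) 1) := by
        rw [mul_sub, ← hmu, ← hmv2]; ring
      rw [final]
      exact Ideal.sub_mem _ (Ideal.mul_mem_left _ _ hrec) (by rw [hv'']; exact hswap)
    · -- swap inside u
      have hxz' : x ≠ z' := fun h => hz'x h.symm
      have hed : e ≠ d := by
        intro h
        rw [← h, hex] at hdz
        rw [Sym2.eq_iff] at hdz
        rcases hdz with ⟨h1, h2⟩|⟨h1, h2⟩
        · exact hwy h1
        · exact hyx h2.symm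
      obtain ⟨u'', hu''⟩ := decomp2 u e d hed heu hdu
      have he_evar : e = evar w x hwx := Subtype.ext hex
      have hd_evar : d = evar y z' hyz' := Subtype.ext hdz
      have hf_evar : f = evar w y hwy := Subtype.ext hfy
      have hD := lemC K hpq hpr hpt hqr hqt hrt w x y z' hwx hwy hz'w.symm hyx.symm hxz' hyz'
      have hswap := swap_mem K (Jid K p q r t) u'' e d (evar w y hwy) (evar x z' hxz')
        (by rw [he_evar, hd_evar]; exact hD)
      obtain ⟨v', hv'⟩ := decomp v f hfv
      have hu2 : u'' + Finsupp.single (evar w y hwy) 1 + Finsupp.single (evar x z' hxz') 1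
          = (u'' + Finsupp.single (evar x z' hxz') 1) + Finsupp.single f 1 := by
        rw [hf_evar]; abel
      have hdegu2 : edeg ((u'' + Finsupp.single (evar x z' hxz') 1) + Finsupp.single f 1)
          = edeg u := by
        rw [hu'', ← hu2]
        simp only [edeg_add, edeg_single, one_smul, evar_val, hex, hdz, sym2deg_mk]
        abel
      have htd2 : tdeg (u'' + Finsupp.single (evar x z' hxz') 1) < N := by
        have h1 : tdeg ((u'' + Finsupp.single (evar x z' hxz') 1) + Finsupp.single f 1)
            = tdeg u := by
          rw [hu'', ← hu2]
          simp only [tdeg_add, tdeg_single]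
        rw [tdeg_add, tdeg_single] at h1
        omega
      have hdeg' : edeg (u'' + Finsupp.single (evar x z' hxz') 1) = edeg v' := by
        have h1 : edeg ((u'' + Finsupp.single (evar x z' hxz') 1) + Finsupp.single f 1)
            = edeg (v' + Finsupp.single f 1) := by
          rw [hdegu2, hdeg, ← hv']
        simp only [edeg_add] at h1
        rw [edeg_add]
        exact add_right_cancel h1
      have hrec := IH _ htd2 (u'' + Finsupp.single (evar x z' hxz') 1) v' rfl hdeg'
      have hmu2 : monomial (u'' + Finsupp.single (evar w y hwy) 1
            + Finsupp.single (evar x z' hxz') 1) (1:K)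
          = X f * monomial (u'' + Finsupp.single (evar x z' hxz') 1) 1 := by
        rw [hu2, monomial_one]
      have hmv : monomial v (1:K) = X f * monomial v' 1 := by rw [hv', monomial_one]
      have final : monomial u (1:K) - monomial v 1
          = (monomial u 1 - monomial (u'' + Finsupp.single (evar w y hwy) 1
              + Finsupp.single (evar x z' hxz') 1) 1)
            + X f * (monomial (u'' + Finsupp.single (evar x z' hxz') 1) 1 - monomial v' 1) := by
        rw [mul_sub, ← hmu2, ← hmv]; ring
      rw [final]
      exact Ideal.add_mem _ (by rw [hu'']; exact hswap) (Ideal.mul_mem_left _ _ hrec)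

end LemB

lemma phi_monomial_c (u : ES n →₀ ℕ) (c : K) :
    phi K n (monomial u c) = monomial (edeg u) c := by
  have h1 : monomial u c = C c * monomial u (1:K) := by rw [C_mul_monomial, mul_one]
  have h2 : monomial (edeg u) c = C c * monomial (edeg u) (1:K) := by rw [C_mul_monomial, mul_one]
  rw [h1, h2, map_mul, phi_monomial]
  congr 1
  rw [show (C c : MvPolynomial (ES n) K) = algebraMap K _ c from rfl, AlgHom.commutes]
  rfl

lemma exists_partner (f : MvPolynomial (ES n) K) (hf : phi K n f = 0) (u : ES n →₀ ℕ)
    (hu : u ∈ f.support) : ∃ v ∈ f.support, v ≠ u ∧ edeg v = edeg u := by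
  by_contra hc
  push_neg at hc
  have h1 : coeff (edeg u) (phi K n f) = coeff u f := by
    conv_lhs => rw [f.as_sum, map_sum]
    rw [Finset.sum_congr rfl (fun v _ => phi_monomial_c K v (coeff v f))]
    rw [MvPolynomial.coeff_sum]
    rw [Finset.sum_congr rfl (fun v _ => coeff_monomial (edeg u) (edeg v) (coeff v f))]
    rw [Finset.sum_eq_single_of_mem u hu (fun v hv hne => if_neg (hc v hv hne))]
    exact if_pos rfl
  rw [hf, coeff_zero] at h1
  exact MvPolynomial.mem_support_iff.mp hu h1.symm

section Main
variable {p q r t : Fin n}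

lemma toric_le_J (hpq : p ≠ q) (hpr : p ≠ r) (hpt : p ≠ t)
    (hqr : q ≠ r) (hqt : q ≠ t) (hrt : r ≠ t) :
    toricIdeal K (⊤ : SimpleGraph (Fin n)) ≤ Jid K p q r t := by
  intro f hf
  rw [toric_eq, RingHom.mem_ker] at hf
  suffices H : ∀ (k : ℕ) (f : MvPolynomial (ES n) K), f.support.card = k → phi K n f = 0 →
      f ∈ Jid K p q r t from H _ f rfl hf
  intro k
  induction k using Nat.strong_induction_on with
  | _ k IH =>
  intro f hcard hker
  rcases eq_or_ne f 0 with rfl|hf0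
  · exact zero_mem _
  have hsne : f.support.Nonempty :=
    Finset.nonempty_of_ne_empty fun h => hf0 (MvPolynomial.support_eq_empty.mp h)
  obtain ⟨u, hu⟩ := hsne
  obtain ⟨v, hv, hvu, hdegv⟩ := exists_partner K f hker u hu
  set c := coeff u f with hcdef
  set g := f - C c * (monomial u 1 - monomial v 1) with hg
  have hbin_ker : phi K n (monomial u (1:K) - monomial v 1) = 0 := by
    rw [map_sub, phi_monomial, phi_monomial, hdegv, sub_self]
  have hgker : phi K n g = 0 := by
    rw [hg, map_sub, map_mul, hker, hbin_ker, mul_zero, sub_zero]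
  have hsupp : g.support ⊆ f.support.erase u := by
    intro w hw
    rw [Finset.mem_erase]
    have hcw : coeff w g ≠ 0 := MvPolynomial.mem_support_iff.mp hw
    constructor
    · rintro rfl
      apply hcw
      rw [hg, coeff_sub, mul_sub, coeff_sub, coeff_C_mul, coeff_C_mul, coeff_monomial,
        coeff_monomial, if_pos rfl, if_neg hvu]
      simp [hcdef]
    · by_contra hwf
      apply hcw
      have hwu : w ≠ u := fun h => hwf (h ▸ hu)
      have hwv : w ≠ v := fun h => hwf (h ▸ hv)
      rw [hg, coeff_sub, mul_sub, coeff_sub, coeff_C_mul, coeff_C_mul, coeff_monomial,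
        coeff_monomial, if_neg (Ne.symm hwu), if_neg (Ne.symm hwv),
        MvPolynomial.notMem_support_iff.mp hwf]
      simp
  have hcard' : g.support.card < k := by
    have h1 := Finset.card_le_card hsupp
    have h2 := Finset.card_erase_of_mem hu
    have h3 : 0 < f.support.card := Finset.card_pos.mpr ⟨u, hu⟩
    omega
  have hgmem := IH _ (hcard ▸ hcard') g rfl hgker
  have hbinmem : monomial u (1:K) - monomial v 1 ∈ Jid K p q r t :=
    lemB K hpq hpr hpt hqr hqt hrt (tdeg u) u v rfl hdegv.symm
  have hfeq : f = g + C c * (monomial u 1 - monomial v 1) := by rw [hg]; ring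
  rw [hfeq]
  exact Ideal.add_mem _ hgmem (Ideal.mul_mem_left _ _ hbinmem)

lemma evar_ne (a b c d : Fin n) (h1 : a ≠ b) (h2 : c ≠ d)
    (hne : ¬((a = c ∧ b = d) ∨ (a = d ∧ b = c))) : evar a b h1 ≠ evar c d h2 :=
  fun h => hne (Sym2.eq_iff.mp (congrArg Subtype.val h))

end Main
end CGSplit
/-- Let `n ≥ 4` and let `(a, b, c, d)` be a cycle of length 4 in the
complete graph `K_n`, i.e. `a = {p,q}`, `b = {q,r}`, `c = {r,t}`, `d = {t,p}` for
pairwise distinct vertices `p, q, r, t`.  Then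
`I_{K_n} = I_{K_n∖{a,c}} + I_{K_n∖{b,d}}` and both summands differ from `I_{K_n}`,
i.e. this is a subgraph splitting of `I_{K_n}`. -/
theorem completeGraph_splitting_of_four_cycle
    (K : Type) [Field K] (n : ℕ) (hn : 4 ≤ n) (p q r t : Fin n)
    (hpq : p ≠ q) (hpr : p ≠ r) (hpt : p ≠ t)
    (hqr : q ≠ r) (hqt : q ≠ t) (hrt : r ≠ t) :
    IsSubgraphSplitting K (⊤ : SimpleGraph (Fin n))
      ((⊤ : SimpleGraph (Fin n)).deleteEdges {s(p, q), s(r, t)})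
      ((⊤ : SimpleGraph (Fin n)).deleteEdges {s(q, r), s(t, p)})
      (SimpleGraph.deleteEdges_le _) (SimpleGraph.deleteEdges_le _) := by
  classical
  have hker1 : (X (CGSplit.evar p q hpq) * X (CGSplit.evar r t hrt)
      - X (CGSplit.evar q r hqr) * X (CGSplit.evar t p hpt.symm) :
      MvPolynomial (CGSplit.ES n) K) ∈ toricIdeal K (⊤ : SimpleGraph (Fin n)) := by
    rw [CGSplit.toric_eq, RingHom.mem_ker]
    simp only [map_sub, map_mul, CGSplit.phi, aeval_X, CGSplit.evar_val, edgeMon, Sym2.lift_mk]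
    ring
  have hker2 : (X (CGSplit.evar q r hqr) * X (CGSplit.evar t p hpt.symm)
      - X (CGSplit.evar p q hpq) * X (CGSplit.evar r t hrt) :
      MvPolynomial (CGSplit.ES n) K) ∈ toricIdeal K (⊤ : SimpleGraph (Fin n)) := by
    rw [CGSplit.toric_eq, RingHom.mem_ker]
    simp only [map_sub, map_mul, CGSplit.phi, aeval_X, CGSplit.evar_val, edgeMon, Sym2.lift_mk]
    ring
  refine ⟨?_, ?_, ?_⟩
  · apply le_antisymm
    · exact CGSplit.toric_le_J K hpq hpr hpt hqr hqt hrt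
    · rw [Submodule.add_eq_sup]
      exact sup_le (CGSplit.extIdeal_le K _ _ _) (CGSplit.extIdeal_le K _ _ _)
  · exact CGSplit.extIdeal_ne K ⊤ _ (SimpleGraph.deleteEdges_le _)
      (CGSplit.evar p q hpq) (CGSplit.evar r t hrt)
      (CGSplit.evar q r hqr) (CGSplit.evar t p hpt.symm)
      (by simp [SimpleGraph.edgeSet_deleteEdges])
      (by simp [SimpleGraph.edgeSet_deleteEdges])
      (CGSplit.evar_ne _ _ _ _ _ _ (by rintro (⟨h1,h2⟩|⟨h1,h2⟩) <;> simp_all))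
      (CGSplit.evar_ne _ _ _ _ _ _ (by rintro (⟨h1,h2⟩|⟨h1,h2⟩) <;> simp_all))
      (CGSplit.evar_ne _ _ _ _ _ _ (by rintro (⟨h1,h2⟩|⟨h1,h2⟩) <;> simp_all))
      (CGSplit.evar_ne _ _ _ _ _ _ (by rintro (⟨h1,h2⟩|⟨h1,h2⟩) <;> simp_all))
      hker1
  · exact CGSplit.extIdeal_ne K ⊤ _ (SimpleGraph.deleteEdges_le _)
      (CGSplit.evar q r hqr) (CGSplit.evar t p hpt.symm)
      (CGSplit.evar p q hpq) (CGSplit.evar r t hrt)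
      (by simp [SimpleGraph.edgeSet_deleteEdges])
      (by simp [SimpleGraph.edgeSet_deleteEdges])
      (CGSplit.evar_ne _ _ _ _ _ _ (by rintro (⟨h1,h2⟩|⟨h1,h2⟩) <;> simp_all))
      (CGSplit.evar_ne _ _ _ _ _ _ (by rintro (⟨h1,h2⟩|⟨h1,h2⟩) <;> simp_all))
      (CGSplit.evar_ne _ _ _ _ _ _ (by rintro (⟨h1,h2⟩|⟨h1,h2⟩) <;> simp_all))
      (CGSplit.evar_ne _ _ _ _ _ _ (by rintro (⟨h1,h2⟩|⟨h1,h2⟩) <;> simp_all))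
      hker2
end

section
/- Let K be a field, n ≥ 4 an integer, and I_{K_n} = I_{G_1} + I_{G_2} a subgraph splitting of the toric ideal of the complete graph K_n. If e is an edge of K_n that is not an edge of G_1 and f is an edge of K_n that is not an edge of G_2, then e and f are adjacent in K_n (they share a common vertex). -/
open MvPolynomial

-- degree map on V →₀ ℕ
private noncomputable def DD {V : Type} (d : V →₀ ℕ) : ℕ :=
  Finsupp.weight (fun _ => (1 : ℕ)) d

private lemma DD_single {V : Type} (a : V) (k : ℕ) : DD (Finsupp.single a k) = k := by
  rw [DD, Finsupp.weight_apply, Finsupp.sum_single_index (by simp), smul_eq_mul, mul_one]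

private lemma DD_add {V : Type} (d d' : V →₀ ℕ) : DD (d + d') = DD d + DD d' :=
  map_add (Finsupp.weight _) d d'

private lemma DD_eq_zero {V : Type} {d : V →₀ ℕ} (h : DD d = 0) : d = 0 := by
  haveI : Finsupp.NonTorsionWeight ℕ (fun _ : V => (1 : ℕ)) :=
    Finsupp.nonTorsionWeight_of (R := ℕ) (w := fun _ : V => (1 : ℕ)) (fun _ => one_ne_zero)
  exact (Finsupp.weight_eq_zero_iff_eq_zero _).mp h

private lemma DD_eq_one {V : Type} {d : V →₀ ℕ} (h : DD d = 1) :
    ∃ a, d = Finsupp.single a 1 := by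
  classical
  have hsum : DD d = ∑ v ∈ d.support, d v := by
    rw [DD, Finsupp.weight_apply, Finsupp.sum]
    exact Finset.sum_congr rfl fun v _ => by simp
  have hne : d ≠ 0 := fun h0 => by simp [h0, DD] at h
  obtain ⟨g, hg⟩ : ∃ g, g ∈ d.support := by
    rcases Finset.eq_empty_or_nonempty d.support with h0 | ⟨g, hg⟩
    · exact absurd (Finsupp.support_eq_empty.mp h0) hne
    · exact ⟨g, hg⟩
  have hsplit : d g + ∑ x ∈ d.support.erase g, d x = 1 := by
    rw [Finset.add_sum_erase _ _ hg, ← hsum, h]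
  have hdg : d g ≠ 0 := Finsupp.mem_support_iff.mp hg
  have hdg1 : d g = 1 := by omega
  have hrest : ∀ x ∈ d.support.erase g, d x = 0 := by
    intro x hx
    have h0 : ∑ x ∈ d.support.erase g, d x = 0 := by omega
    exact Finset.sum_eq_zero_iff.mp h0 x hx
  refine ⟨g, Finsupp.ext fun x => ?_⟩
  by_cases hx : x = g
  · subst hx; simp [hdg1]
  · rw [Finsupp.single_apply, if_neg (Ne.symm hx)]
    by_cases hxs : x ∈ d.support
    · exact hrest x (Finset.mem_erase.mpr ⟨hx, hxs⟩)
    · exact Finsupp.notMem_support_iff.mp hxs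

private lemma DD_mapDomain {α β : Type} (f : α → β) (u : α →₀ ℕ) :
    DD (Finsupp.mapDomain f u) = DD u := by
  rw [Finsupp.mapDomain, DD, map_finsuppSum]
  rw [DD, Finsupp.weight_apply]
  exact Finsupp.sum_congr fun a _ => by
    show DD (Finsupp.single (f a) (u a)) = _
    rw [DD_single]; simp

-- the degree of an edge
private noncomputable def edgeDeg {V : Type} (e : Sym2 V) : V →₀ ℕ :=
  Sym2.lift ⟨fun u w => Finsupp.single u 1 + Finsupp.single w 1,
    fun u w => add_comm _ _⟩ e

private lemma edgeDeg_mk {V : Type} (u w : V) :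
    edgeDeg s(u, w) = Finsupp.single u 1 + Finsupp.single w 1 :=
  Sym2.lift_mk _ _ _

private lemma DD_edgeDeg {V : Type} (e : Sym2 V) : DD (edgeDeg e) = 2 := by
  induction e using Sym2.ind with
  | _ u w => rw [edgeDeg_mk, DD_add, DD_single, DD_single]

private lemma edgeMon_eq {K : Type} [Field K] {V : Type} (e : Sym2 V) :
    edgeMon K e = monomial (edgeDeg e) (1 : K) := by
  induction e using Sym2.ind with
  | _ u w =>
    rw [edgeMon, Sym2.lift_mk, edgeDeg_mk]
    show (X u : MvPolynomial V K) * X w = _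
    have hX : ∀ s : V, (X s : MvPolynomial V K) = monomial (Finsupp.single s 1) 1 :=
      fun s => by rw [← X_pow_eq_monomial, pow_one]
    rw [hX, hX, monomial_mul, one_mul]

private lemma edgeDeg_inj {V : Type} {e f : Sym2 V} (he : ¬ e.IsDiag)
    (h : edgeDeg e = edgeDeg f) : e = f := by
  classical
  induction e using Sym2.ind with
  | _ u w =>
  induction f using Sym2.ind with
  | _ a b =>
  rw [edgeDeg_mk, edgeDeg_mk] at h
  have huw : u ≠ w := by simpa using he
  have hu1 : a = u ∨ b = u := by
    by_contra hc
    push_neg at hc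
    have := DFunLike.congr_fun h u
    simp [Finsupp.single_apply, Ne.symm huw, hc.1, hc.2] at this
  have hw1 : a = w ∨ b = w := by
    by_contra hc
    push_neg at hc
    have := DFunLike.congr_fun h w
    simp [Finsupp.single_apply, huw, hc.1, hc.2] at this
  rw [Sym2.eq_iff]
  rcases hu1 with h1 | h1 <;> rcases hw1 with h2 | h2
  · exact absurd (h1 ▸ h2 : u = w) huw
  · exact Or.inl ⟨h1.symm, h2.symm⟩
  · exact Or.inr ⟨h1.symm, h2.symm⟩
  · exact absurd (h1 ▸ h2 : u = w) huw

/-- The multidegree of a monomial exponent on edges. -/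
private noncomputable def edgesDeg {V : Type} {G : SimpleGraph V}
    (m : G.edgeSet →₀ ℕ) : V →₀ ℕ :=
  m.sum fun g k => k • edgeDeg (g : Sym2 V)

private lemma DD_edgesDeg {V : Type} {G : SimpleGraph V} (m : G.edgeSet →₀ ℕ) :
    DD (edgesDeg m) = 2 * DD m := by
  have h1 : DD (edgesDeg m) = m.sum fun g k => k * 2 := by
    rw [edgesDeg, DD, map_finsuppSum]
    refine Finsupp.sum_congr fun g _ => ?_
    show Finsupp.weight (fun _ => (1 : ℕ)) ((m g) • edgeDeg (g : Sym2 V)) = _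
    rw [map_nsmul]
    show (m g) • DD (edgeDeg (g : Sym2 V)) = _
    rw [DD_edgeDeg, smul_eq_mul]
  have h2 : DD m = m.sum fun _ k => k := by
    rw [DD, Finsupp.weight_apply]
    exact Finsupp.sum_congr fun g _ => by simp
  rw [h1, h2, Finsupp.sum, Finsupp.sum, Finset.mul_sum]
  exact Finset.sum_congr rfl fun g _ => mul_comm _ _

private lemma edgesDeg_zero {V : Type} {G : SimpleGraph V} :
    edgesDeg (0 : G.edgeSet →₀ ℕ) = 0 := by
  rw [edgesDeg, Finsupp.sum_zero_index]

private lemma edgesDeg_single {V : Type} {G : SimpleGraph V} (g : G.edgeSet) :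
    edgesDeg (Finsupp.single g 1) = edgeDeg (g : Sym2 V) := by
  rw [edgesDeg, Finsupp.sum_single_index (by simp), one_smul]

private lemma edgesDeg_eq_zero_iff {V : Type} {G : SimpleGraph V} (m : G.edgeSet →₀ ℕ) :
    edgesDeg m = 0 ↔ m = 0 := by
  constructor
  · intro h
    have := DD_edgesDeg m
    rw [h] at this
    have h0 : DD m = 0 := by
      have : (0 : ℕ) = 2 * DD m := by rw [← this, DD]; simp
      omega
    exact DD_eq_zero h0
  · rintro rfl; exact edgesDeg_zero

private lemma edgesDeg_eq_edgeDeg_iff {V : Type} {G : SimpleGraph V} (g₀ : G.edgeSet)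
    (m : G.edgeSet →₀ ℕ) : edgesDeg m = edgeDeg (g₀ : Sym2 V) ↔ m = Finsupp.single g₀ 1 := by
  constructor
  · intro h
    have hD := DD_edgesDeg m
    rw [h, DD_edgeDeg] at hD
    have h1 : DD m = 1 := by omega
    obtain ⟨g, rfl⟩ := DD_eq_one h1
    rw [edgesDeg_single] at h
    have hnd : ¬ (g : Sym2 V).IsDiag :=
      SimpleGraph.not_isDiag_of_mem_edgeSet G g.2
    have : (g : Sym2 V) = (g₀ : Sym2 V) := edgeDeg_inj hnd h
    rw [Subtype.ext this]
  · rintro rfl; exact edgesDeg_single g₀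

private lemma aeval_edgeMon_monomial {K : Type} [Field K] {V : Type} (G : SimpleGraph V)
    (m : G.edgeSet →₀ ℕ) (c : K) :
    aeval (fun e : G.edgeSet => edgeMon K (e : Sym2 V)) (monomial m c)
      = monomial (edgesDeg m) c := by
  rw [aeval_monomial]
  have key : ∀ s : Finset G.edgeSet,
      (∏ g ∈ s, edgeMon K (g : Sym2 V) ^ m g) = monomial (∑ g ∈ s, m g • edgeDeg (g : Sym2 V)) (1 : K) := by
    intro s
    induction s using Finset.cons_induction with
    | empty => simp [monomial_zero']
    | cons a s ha ih =>
        rw [Finset.prod_cons, Finset.sum_cons, ih, edgeMon_eq, monomial_pow, one_pow,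
          monomial_mul, one_mul]
  rw [Finsupp.prod, key, edgesDeg, Finsupp.sum, algebraMap_eq, C_mul_monomial, mul_one]

private lemma coeff_of_mem_toric {K : Type} [Field K] {V : Type} {G : SimpleGraph V}
    {q : MvPolynomial G.edgeSet K} (hq : q ∈ toricIdeal K G) (d : V →₀ ℕ)
    (m₀ : G.edgeSet →₀ ℕ) (hu : ∀ m, edgesDeg m = d ↔ m = m₀) :
    coeff m₀ q = 0 := by
  classical
  have hq0 : (aeval (fun e : G.edgeSet => edgeMon K (e : Sym2 V))) q = 0 := by
    rwa [toricIdeal, RingHom.mem_ker] at hq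
  have hc : (0 : K) = ∑ m ∈ q.support, if m = m₀ then coeff m q else 0 := by
    calc (0 : K) = coeff d ((aeval (fun e : G.edgeSet => edgeMon K (e : Sym2 V))) q) := by
          rw [hq0, coeff_zero]
    _ = coeff d ((aeval (fun e : G.edgeSet => edgeMon K (e : Sym2 V)))
          (∑ v ∈ q.support, monomial v (coeff v q))) := by rw [support_sum_monomial_coeff]
    _ = ∑ m ∈ q.support, coeff d (monomial (edgesDeg m) (coeff m q)) := by
          rw [map_sum, coeff_sum]
          exact Finset.sum_congr rfl fun m _ => by rw [aeval_edgeMon_monomial]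
    _ = ∑ m ∈ q.support, if m = m₀ then coeff m q else 0 := by
          refine Finset.sum_congr rfl fun m _ => ?_
          rw [coeff_monomial]
          by_cases h : edgesDeg m = d
          · rw [if_pos h, if_pos ((hu m).mp h)]
          · rw [if_neg h, if_neg (fun hm => h (by rw [hm]; exact (hu m₀).mpr rfl))]
  rw [Finset.sum_ite_eq' q.support m₀ (fun m => coeff m q)] at hc
  by_cases hm : m₀ ∈ q.support
  · rw [if_pos hm] at hc; exact hc.symm
  · exact notMem_support_iff.mp hm

private lemma toric_coeff_zero {K : Type} [Field K] {V : Type} {G : SimpleGraph V}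
    {q : MvPolynomial G.edgeSet K} (hq : q ∈ toricIdeal K G) : coeff 0 q = 0 :=
  coeff_of_mem_toric hq 0 0 (fun m => by rw [edgesDeg_eq_zero_iff])

private lemma toric_coeff_single {K : Type} [Field K] {V : Type} {G : SimpleGraph V}
    {q : MvPolynomial G.edgeSet K} (hq : q ∈ toricIdeal K G) (g : G.edgeSet) :
    coeff (Finsupp.single g 1) q = 0 :=
  coeff_of_mem_toric hq (edgeDeg (g : Sym2 V)) (Finsupp.single g 1)
    (edgesDeg_eq_edgeDeg_iff g)

private lemma coeff_extIdeal_eq_zero {K : Type} [Field K] {V : Type} {G H : SimpleGraph V}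
    (hle : H ≤ G) (e f : G.edgeSet) (hef : e ≠ f) (he : (e : Sym2 V) ∉ H.edgeSet)
    {p : MvPolynomial G.edgeSet K} (hp : p ∈ extIdeal K G H hle) :
    ∀ v ≤ Finsupp.single e 1 + Finsupp.single f 1, coeff v p = 0 := by
  classical
  have hsp : p ∈ Submodule.span (MvPolynomial G.edgeSet K)
      (((MvPolynomial.rename (Set.inclusion (SimpleGraph.edgeSet_mono hle)) :
        MvPolynomial H.edgeSet K →ₐ[K] MvPolynomial G.edgeSet K)) ''
        (toricIdeal K H : Set (MvPolynomial H.edgeSet K))) := hp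
  clear hp
  induction hsp using Submodule.span_induction with
  | mem x hx =>
      obtain ⟨q, hq, rfl⟩ := hx
      intro v hv
      refine coeff_rename_eq_zero _ _ _ fun u hu => ?_
      by_cases hve : v e = 0
      · -- v = 0 or v = single f 1
        have hv' := Finsupp.le_def.mp hv
        have hDv : DD u ≤ 1 := by
          have h1 : DD v ≤ 1 := by
            by_cases hvf : v f = 0
            · have hv0 : v = 0 := by
                ext g
                by_cases hge : g = e
                · subst hge; exact hve
                · by_cases hgf : g = f
                  · subst hgf; exact hvf
                  · have := hv' g
                    simp [Finsupp.single_apply, Ne.symm hge, Ne.symm hgf] at this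
                    exact this
              rw [hv0]
              simp [DD]
            · have hvf1 : v f = 1 := by
                have := hv' f
                simp [Finsupp.single_apply, hef] at this
                omega
              have hv0 : v = Finsupp.single f 1 := by
                ext g
                by_cases hgf : g = f
                · subst hgf; simp [hvf1]
                · rw [Finsupp.single_apply, if_neg (Ne.symm hgf)]
                  by_cases hge : g = e
                  · subst hge; exact hve
                  · have := hv' g
                    simp [Finsupp.single_apply, Ne.symm hge, Ne.symm hgf] at this
                    exact this
              rw [hv0, DD_single]
          rw [← hu, DD_mapDomain] at h1
          exact h1
        interval_cases hDD : DD u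
        · have hu0 : u = 0 := by
            haveI : Finsupp.NonTorsionWeight ℕ (fun _ : H.edgeSet => (1 : ℕ)) :=
              Finsupp.nonTorsionWeight_of (R := ℕ) (w := fun _ => (1 : ℕ)) (fun _ => one_ne_zero)
            exact (Finsupp.weight_eq_zero_iff_eq_zero _).mp hDD
          rw [hu0]
          exact toric_coeff_zero hq
        · obtain ⟨g, rfl⟩ := DD_eq_one hDD
          exact toric_coeff_single hq g
      · exfalso
        apply hve
        rw [← hu]
        refine Finsupp.mapDomain_notin_range _ _ ?_
        rintro ⟨g, hg⟩
        apply he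
        have : (e : Sym2 V) = (g : Sym2 V) := by
          rw [← hg, Set.coe_inclusion]
        rw [this]
        exact g.2
  | zero => intro v _; simp
  | add x y hx hy ihx ihy =>
      intro v hv
      rw [coeff_add, ihx v hv, ihy v hv, add_zero]
  | smul a x hx ih =>
      intro v hv
      rw [smul_eq_mul, coeff_mul]
      refine Finset.sum_eq_zero fun z hz => ?_
      have hz2 : z.2 ≤ v := by
        have := Finset.HasAntidiagonal.mem_antidiagonal.mp hz
        calc z.2 ≤ z.1 + z.2 := le_add_self
        _ = v := this
      rw [ih z.2 (hz2.trans hv), mul_zero]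

private lemma X_mul_X_eq {K : Type} [Field K] {α : Type} (s t : α) :
    (X s : MvPolynomial α K) * X t
      = monomial (Finsupp.single s 1 + Finsupp.single t 1) 1 := by
  have hX : ∀ s : α, (X s : MvPolynomial α K) = monomial (Finsupp.single s 1) 1 :=
    fun s => by rw [← X_pow_eq_monomial, pow_one]
  rw [hX, hX, monomial_mul, one_mul]

/-- Let `n ≥ 4` and let `I_{K_n} = I_{G₁} + I_{G₂}` be a subgraph
splitting of the toric ideal of the complete graph `K_n`.  If `e` is an edge of `K_n`
not in `G₁` and `f` is an edge of `K_n` not in `G₂`, then `e` and `f` are adjacent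
(they share a common vertex). -/
theorem completeGraph_splitting_missing_edges_adjacent
    (K : Type) [Field K] (n : ℕ) (hn : 4 ≤ n) (G₁ G₂ : SimpleGraph (Fin n))
    (hsplit : IsSubgraphSplitting K (⊤ : SimpleGraph (Fin n)) G₁ G₂ le_top le_top)
    (e f : Sym2 (Fin n))
    (he : e ∈ (⊤ : SimpleGraph (Fin n)).edgeSet) (heG₁ : e ∉ G₁.edgeSet)
    (hf : f ∈ (⊤ : SimpleGraph (Fin n)).edgeSet) (hfG₂ : f ∉ G₂.edgeSet) :
    ∃ v : Fin n, v ∈ e ∧ v ∈ f := by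
  classical
  by_contra hcon
  push_neg at hcon
  obtain ⟨hEq, -, -⟩ := hsplit
  revert he heG₁ hcon
  induction e using Sym2.ind with
  | _ a b =>
  intro he heG₁ hcon
  revert hf hfG₂ hcon
  induction f using Sym2.ind with
  | _ c d =>
  intro hf hfG₂ hcon
  have hab : a ≠ b := by simpa using he
  have hcd : c ≠ d := by simpa using hf
  obtain ⟨hac, had⟩ : a ≠ c ∧ a ≠ d := by
    simpa [Sym2.mem_iff, not_or] using hcon a (by simp)
  obtain ⟨hbc, hbd⟩ : b ≠ c ∧ b ≠ d := by
    simpa [Sym2.mem_iff, not_or] using hcon b (by simp)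
  have hacE : s(a, c) ∈ (⊤ : SimpleGraph (Fin n)).edgeSet := by simpa using hac
  have hbdE : s(b, d) ∈ (⊤ : SimpleGraph (Fin n)).edgeSet := by simpa using hbd
  set ee : (⊤ : SimpleGraph (Fin n)).edgeSet := ⟨s(a, b), he⟩ with hee_def
  set ff : (⊤ : SimpleGraph (Fin n)).edgeSet := ⟨s(c, d), hf⟩ with hff_def
  set gg : (⊤ : SimpleGraph (Fin n)).edgeSet := ⟨s(a, c), hacE⟩ with hgg_def
  set hh : (⊤ : SimpleGraph (Fin n)).edgeSet := ⟨s(b, d), hbdE⟩ with hhh_def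
  have hS1 : s(a, b) ≠ s(c, d) := by simp [Sym2.eq_iff, hac, had, hbc, hbd]
  have hS2 : s(a, b) ≠ s(a, c) := by simp [Sym2.eq_iff, hbc, hac]
  have hS3 : s(a, b) ≠ s(b, d) := by simp [Sym2.eq_iff, hab, had]
  have hef : ee ≠ ff := fun h => hS1 (congrArg Subtype.val h)
  have heg : ee ≠ gg := fun h => hS2 (congrArg Subtype.val h)
  have heh : ee ≠ hh := fun h => hS3 (congrArg Subtype.val h)
  set B : MvPolynomial (⊤ : SimpleGraph (Fin n)).edgeSet K :=
    X ee * X ff - X gg * X hh with hB_def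
  have hB : B ∈ toricIdeal K (⊤ : SimpleGraph (Fin n)) := by
    rw [toricIdeal, RingHom.mem_ker]
    have hEM : ∀ u w : Fin n, edgeMon K s(u, w) = (X u : MvPolynomial (Fin n) K) * X w :=
      fun u w => Sym2.lift_mk _ _ _
    show (aeval fun e : (⊤ : SimpleGraph (Fin n)).edgeSet => edgeMon K (e : Sym2 (Fin n))) B = 0
    rw [hB_def, map_sub, map_mul, map_mul, aeval_X, aeval_X, aeval_X, aeval_X]
    show edgeMon K s(a, b) * edgeMon K s(c, d) - edgeMon K s(a, c) * edgeMon K s(b, d) = 0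
    rw [hEM, hEM, hEM, hEM]
    ring
  rw [hEq, Submodule.add_eq_sup, Submodule.mem_sup] at hB
  obtain ⟨p, hp, q, hq, hpq⟩ := hB
  set m₁ : (⊤ : SimpleGraph (Fin n)).edgeSet →₀ ℕ :=
    Finsupp.single ee 1 + Finsupp.single ff 1 with hm₁_def
  have hpc : coeff m₁ p = 0 :=
    coeff_extIdeal_eq_zero le_top ee ff hef heG₁ hp m₁ le_rfl
  have hqc : coeff m₁ q = 0 :=
    coeff_extIdeal_eq_zero le_top ff ee hef.symm hfG₂ hq m₁ (le_of_eq (add_comm _ _))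
  have hne : Finsupp.single gg 1 + Finsupp.single hh 1 ≠ m₁ := by
    intro h
    have h' := DFunLike.congr_fun h ee
    simp [hm₁_def, Finsupp.add_apply, Finsupp.single_apply, heg.symm, heh.symm, hef.symm] at h'
  have hB1 : coeff m₁ B = 1 := by
    rw [hB_def, coeff_sub, X_mul_X_eq, X_mul_X_eq, coeff_monomial, coeff_monomial,
      if_pos rfl, if_neg hne, sub_zero]
  rw [← hpq, coeff_add, hpc, hqc, add_zero] at hB1
  exact one_ne_zero hB1.symm
end

section
/- Let K be a field, n ≥ 4 an integer, and I_{K_n} = I_{G_1} + I_{G_2} a subgraph splitting of the toric ideal of the complete graph K_n. Suppose e is an edge of K_n that is not an edge of G_1, and f and h are two distinct edges of K_n neither of which is an edge of G_2. Then f and h are not adjacent in K_n (they share no common vertex). -/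
open MvPolynomial

/-! ### Auxiliary development for Statement 9 -/

namespace ToricAux9

/-- total degree of an exponent vector -/
def tdeg {α : Type} (w : α →₀ ℕ) : ℕ := w.sum fun _ k => k

@[simp] lemma tdeg_zero {α : Type} : tdeg (0 : α →₀ ℕ) = 0 := Finsupp.sum_zero_index

@[simp] lemma tdeg_single {α : Type} (a : α) (n : ℕ) : tdeg (Finsupp.single a n) = n :=
  Finsupp.sum_single_index rfl

@[simp] lemma tdeg_add {α : Type} (f g : α →₀ ℕ) : tdeg (f + g) = tdeg f + tdeg g :=
  Finsupp.sum_add_index' (fun _ => rfl) (fun _ _ _ => rfl)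

lemma tdeg_eq_zero {α : Type} {w : α →₀ ℕ} (h : tdeg w = 0) : w = 0 := by
  have h' : ∀ a ∈ w.support, w a = 0 := by
    rw [tdeg, Finsupp.sum, Finset.sum_eq_zero_iff] at h
    exact h
  ext a
  by_cases ha : a ∈ w.support
  · simpa using h' a ha
  · simpa using Finsupp.notMem_support_iff.mp ha

lemma tdeg_eq_one {α : Type} {w : α →₀ ℕ} (h : tdeg w = 1) :
    ∃ a, w = Finsupp.single a 1 := by
  have hw : w ≠ 0 := by rintro rfl; simp at h
  obtain ⟨a, ha⟩ := Finsupp.support_nonempty_iff.mpr hw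
  have hdec := Finsupp.single_add_erase a w
  have h1 : tdeg (Finsupp.single a (w a)) + tdeg (w.erase a) = 1 := by
    rw [← tdeg_add, hdec, h]
  have hwa : 1 ≤ w a := by
    have := Finsupp.mem_support_iff.mp ha; omega
  rw [tdeg_single] at h1
  have hwa1 : w a = 1 := by omega
  have : w.erase a = 0 := tdeg_eq_zero (by omega)
  exact ⟨a, by rw [← hdec, this, hwa1, add_zero]⟩

lemma tdeg_eq_two {α : Type} {w : α →₀ ℕ} (h : tdeg w = 2) :
    (∃ a, w = Finsupp.single a 2) ∨
    (∃ a b, a ≠ b ∧ w = Finsupp.single a 1 + Finsupp.single b 1) := by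
  have hw : w ≠ 0 := by rintro rfl; simp at h
  obtain ⟨a, ha⟩ := Finsupp.support_nonempty_iff.mpr hw
  have hdec := Finsupp.single_add_erase a w
  have h1 : tdeg (Finsupp.single a (w a)) + tdeg (w.erase a) = 2 := by
    rw [← tdeg_add, hdec, h]
  rw [tdeg_single] at h1
  have hwa : 1 ≤ w a := by
    have := Finsupp.mem_support_iff.mp ha; omega
  rcases Nat.lt_or_ge (w a) 2 with h2 | h2
  · have hwa1 : w a = 1 := by omega
    obtain ⟨b, hb⟩ := tdeg_eq_one (w := w.erase a) (by omega)
    have hab : a ≠ b := by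
      intro hab
      have : (w.erase a) a = 0 := Finsupp.erase_same
      rw [hb, ← hab, Finsupp.single_eq_same] at this
      omega
    right
    exact ⟨a, b, hab, by rw [← hdec, hb, hwa1]⟩
  · have hwa2 : w a = 2 := by omega
    have : w.erase a = 0 := tdeg_eq_zero (by omega)
    left
    exact ⟨a, by rw [← hdec, this, hwa2, add_zero]⟩

/-- The multiset of the two endpoints of an element of `Sym2 V`. -/
def mdeg {V : Type} : Sym2 V → Multiset V :=
  Sym2.lift ⟨fun a b => {a, b}, fun a b => by
    simp [Multiset.insert_eq_cons]; exact Multiset.cons_swap a b 0⟩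

@[simp] lemma mdeg_mk {V : Type} (a b : V) : mdeg s(a, b) = {a, b} := rfl

lemma card_mdeg {V : Type} (z : Sym2 V) : Multiset.card (mdeg z) = 2 := by
  induction z using Sym2.ind with
  | _ a b => simp [Multiset.insert_eq_cons]

lemma mem_mdeg_split {V : Type} {z : Sym2 V} {p : V} (hp : p ∈ mdeg z) :
    ∃ t, z = s(p, t) ∧ mdeg z = p ::ₘ {t} := by
  induction z using Sym2.ind with
  | _ a b =>
    simp only [mdeg_mk, Multiset.insert_eq_cons, Multiset.mem_cons,
      Multiset.mem_singleton] at hp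
    rcases hp with h | h
    · subst h; exact ⟨b, rfl, by simp [Multiset.insert_eq_cons]⟩
    · subst h
      exact ⟨a, Sym2.eq_swap, by
        simp only [mdeg_mk, Multiset.insert_eq_cons]
        exact Multiset.cons_swap a p 0⟩

lemma mdeg_eq_pair {V : Type} {z : Sym2 V} {u v : V} (h : mdeg z = {u, v}) :
    z = s(u, v) := by
  have hu : u ∈ mdeg z := by rw [h]; simp
  obtain ⟨t, hz, hm⟩ := mem_mdeg_split hu
  rw [hm, Multiset.insert_eq_cons] at h
  have : ({t} : Multiset V) = {v} := by rwa [Multiset.cons_inj_right] at h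
  rw [Multiset.singleton_inj] at this
  rw [hz, this]

lemma mdeg_inj {V : Type} {z z' : Sym2 V} (h : mdeg z = mdeg z') : z = z' := by
  induction z' using Sym2.ind with
  | _ a b => rw [mdeg_mk] at h; exact mdeg_eq_pair h

/-- conclusion pattern for the quadruple classification -/
def QuadC {V : Type} (z₁ z₂ : Sym2 V) (p q r s : V) : Prop :=
  (z₁ = s(p, q) ∧ z₂ = s(r, s)) ∨ (z₁ = s(r, s) ∧ z₂ = s(p, q)) ∨
  (z₁ = s(p, r) ∧ z₂ = s(q, s)) ∨ (z₁ = s(q, s) ∧ z₂ = s(p, r)) ∨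
  (z₁ = s(p, s) ∧ z₂ = s(q, r)) ∨ (z₁ = s(q, r) ∧ z₂ = s(p, s))

lemma quadC_swap {V : Type} {z₁ z₂ : Sym2 V} {p q r s : V}
    (h : QuadC z₁ z₂ p q r s) : QuadC z₂ z₁ p q r s := by
  unfold QuadC at *; tauto

lemma quad_aux {V : Type} {z₁ z₂ : Sym2 V} {p q r s : V}
    (h : mdeg z₁ + mdeg z₂ = {p, q, r, s}) (hp : p ∈ mdeg z₁) :
    QuadC z₁ z₂ p q r s := by
  obtain ⟨t, hz1, hm1⟩ := mem_mdeg_split hp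
  rw [hm1] at h
  simp only [Multiset.insert_eq_cons, Multiset.cons_add] at h
  have h2 : ({t} : Multiset V) + mdeg z₂ = q ::ₘ r ::ₘ {s} := by
    rwa [Multiset.cons_inj_right] at h
  rw [Multiset.singleton_add] at h2
  have ht : t ∈ (q ::ₘ r ::ₘ {s} : Multiset V) := by rw [← h2]; simp
  simp only [Multiset.mem_cons, Multiset.mem_singleton] at ht
  rcases ht with rfl | rfl | rfl
  · have : mdeg z₂ = ({r, s} : Multiset V) := by
      rw [Multiset.insert_eq_cons]; rwa [Multiset.cons_inj_right] at h2
    exact Or.inl ⟨hz1, mdeg_eq_pair this⟩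
  · have h3 : t ::ₘ mdeg z₂ = t ::ₘ q ::ₘ {s} := by
      rw [h2, Multiset.cons_swap]
    have : mdeg z₂ = ({q, s} : Multiset V) := by
      rw [Multiset.insert_eq_cons]; rwa [Multiset.cons_inj_right] at h3
    exact Or.inr (Or.inr (Or.inl ⟨hz1, mdeg_eq_pair this⟩))
  · have h3 : t ::ₘ mdeg z₂ = t ::ₘ q ::ₘ {r} := by
      rw [h2]
      change q ::ₘ r ::ₘ t ::ₘ 0 = t ::ₘ q ::ₘ r ::ₘ 0
      rw [Multiset.cons_swap r t, Multiset.cons_swap q t]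
    have : mdeg z₂ = ({q, r} : Multiset V) := by
      rw [Multiset.insert_eq_cons]; rwa [Multiset.cons_inj_right] at h3
    exact Or.inr (Or.inr (Or.inr (Or.inr (Or.inl ⟨hz1, mdeg_eq_pair this⟩))))

lemma quad_classify {V : Type} {z₁ z₂ : Sym2 V} {p q r s : V}
    (h : mdeg z₁ + mdeg z₂ = {p, q, r, s}) : QuadC z₁ z₂ p q r s := by
  have hp : p ∈ mdeg z₁ + mdeg z₂ := by rw [h]; simp
  rw [Multiset.mem_add] at hp
  rcases hp with hp | hp
  · exact quad_aux h hp
  · exact quadC_swap (quad_aux (by rwa [add_comm]) hp)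

section Graph

variable {V : Type} [DecidableEq V] {K : Type} [Field K]

lemma edgeMon_mk (a b : V) : edgeMon K s(a, b) = X a * X b := rfl

lemma edgeMon_eq (z : Sym2 V) :
    edgeMon K z = monomial (Multiset.toFinsupp (mdeg z)) 1 := by
  induction z using Sym2.ind with
  | _ a b =>
    rw [edgeMon_mk, mdeg_mk, ← pow_one (X a : MvPolynomial V K), ← pow_one (X b),
      X_pow_eq_monomial, X_pow_eq_monomial, monomial_mul, one_mul]
    congr 1
    rw [show ({a, b} : Multiset V) = {a} + {b} by
          simp [Multiset.insert_eq_cons, Multiset.singleton_add],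
      map_add, Multiset.toFinsupp_singleton, Multiset.toFinsupp_singleton]

variable {G : SimpleGraph V}

/-- the multiset vertex-degree of an exponent vector on edges of `G` -/
def vdegM (w : G.edgeSet →₀ ℕ) : Multiset V := w.sum fun e k => k • mdeg (e : Sym2 V)

@[simp] lemma vdegM_zero : vdegM (0 : G.edgeSet →₀ ℕ) = 0 := Finsupp.sum_zero_index

@[simp] lemma vdegM_add (f g : G.edgeSet →₀ ℕ) : vdegM (f + g) = vdegM f + vdegM g :=
  Finsupp.sum_add_index' (fun _ => zero_smul _ _) (fun _ b c => add_smul b c _)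

@[simp] lemma vdegM_single (e : G.edgeSet) (n : ℕ) :
    vdegM (Finsupp.single e n) = n • mdeg (e : Sym2 V) :=
  Finsupp.sum_single_index (zero_smul _ _)

lemma card_vdegM (w : G.edgeSet →₀ ℕ) :
    Multiset.card (vdegM w) = 2 * tdeg w := by
  induction w using Finsupp.induction with
  | zero => simp [tdeg]
  | single_add e n f _ _ ih =>
    rw [vdegM_add, vdegM_single, Multiset.card_add, ih, Multiset.card_nsmul, card_mdeg,
      show tdeg (Finsupp.single e n + f) = n + tdeg f from by
        rw [tdeg, Finsupp.sum_add_index' (fun _ => rfl) (fun _ _ _ => rfl)]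
        simp [tdeg, Finsupp.sum_single_index]]
    ring

/-- the `aeval` map underlying `toricIdeal K G` -/
noncomputable def aevalE (K : Type) [Field K] {V : Type} (G : SimpleGraph V) :
    MvPolynomial G.edgeSet K →ₐ[K] MvPolynomial V K :=
  MvPolynomial.aeval (fun e : G.edgeSet => edgeMon K (e : Sym2 V))

lemma mem_toricIdeal_iff {P : MvPolynomial G.edgeSet K} :
    P ∈ toricIdeal K G ↔ aevalE K G P = 0 := Iff.rfl

lemma aevalE_monomial (w : G.edgeSet →₀ ℕ) (c : K) :
    aevalE K G (monomial w c) = monomial (Multiset.toFinsupp (vdegM w)) c := by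
  rw [aevalE, aeval_monomial, algebraMap_eq]
  have : (w.prod fun e k => edgeMon K (e : Sym2 V) ^ k) =
      monomial (Multiset.toFinsupp (vdegM w)) (1 : K) := by
    induction w using Finsupp.induction with
    | zero =>
      rw [Finsupp.prod_zero_index, vdegM_zero]
      simp
    | single_add e n f _ _ ih =>
      rw [Finsupp.prod_add_index' (fun a => pow_zero _) (fun a b c => pow_add _ b c),
        Finsupp.prod_single_index
          (h := fun (a : G.edgeSet) (k : ℕ) => edgeMon K (a : Sym2 V) ^ k) (pow_zero _),
        ih, edgeMon_eq, monomial_pow, monomial_mul, one_pow, one_mul, vdegM_add,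
        vdegM_single, map_add]
      congr 2
      rw [map_nsmul]
  rw [this, C_apply, monomial_mul, zero_add, mul_one]

lemma coeff_aevalE (P : MvPolynomial G.edgeSet K) (τ : V →₀ ℕ) :
    coeff τ (aevalE K G P) =
      ∑ w ∈ P.support,
        if Multiset.toFinsupp (vdegM w) = τ then coeff w P else 0 := by
  conv_lhs => rw [← support_sum_monomial_coeff P]
  rw [map_sum, MvPolynomial.coeff_sum]
  refine Finset.sum_congr rfl fun w _ => ?_
  rw [aevalE_monomial, coeff_monomial]

lemma ker_sum_eq_zero (P : MvPolynomial G.edgeSet K) (hP : aevalE K G P = 0)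
    (m : Multiset V) :
    (∑ w ∈ P.support, if vdegM w = m then coeff w P else 0) = 0 := by
  have h := coeff_aevalE P (Multiset.toFinsupp m)
  rw [hP, coeff_zero] at h
  have h2 : ∀ w ∈ P.support,
      (if Multiset.toFinsupp (vdegM w) = Multiset.toFinsupp m
        then coeff w P else 0) = if vdegM w = m then coeff w P else 0 := by
    intro w _
    exact if_congr (EmbeddingLike.apply_eq_iff_eq _) rfl rfl
  rw [Finset.sum_congr rfl h2] at h
  exact h.symm

lemma ker_coeff_zero (P : MvPolynomial G.edgeSet K) (hP : aevalE K G P = 0) :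
    coeff 0 P = 0 := by
  have h := ker_sum_eq_zero P hP 0
  have h2 : ∀ w ∈ P.support,
      (if vdegM w = 0 then coeff w P else 0) = if w = 0 then coeff w P else 0 := by
    intro w _
    refine if_congr ⟨fun hv => ?_, fun hw => by rw [hw, vdegM_zero]⟩ rfl rfl
    have hc := card_vdegM w
    rw [hv] at hc
    simp only [Multiset.card_zero] at hc
    exact tdeg_eq_zero (by omega)
  rw [Finset.sum_congr rfl h2, Finset.sum_ite_eq' P.support 0 (fun w => coeff w P)] at h
  by_cases h0 : (0 : G.edgeSet →₀ ℕ) ∈ P.support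
  · rwa [if_pos h0] at h
  · exact Finsupp.notMem_support_iff.mp h0

lemma ker_coeff_single (P : MvPolynomial G.edgeSet K) (hP : aevalE K G P = 0)
    (E : G.edgeSet) : coeff (Finsupp.single E 1) P = 0 := by
  have h := ker_sum_eq_zero P hP (mdeg (E : Sym2 V))
  have h2 : ∀ w ∈ P.support,
      (if vdegM w = mdeg (E : Sym2 V) then coeff w P else 0) =
        if w = Finsupp.single E 1 then coeff w P else 0 := by
    intro w _
    refine if_congr ⟨fun hv => ?_, fun hw => by rw [hw, vdegM_single, one_smul]⟩ rfl rfl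
    have hc := card_vdegM w
    rw [hv, card_mdeg] at hc
    obtain ⟨E', hE'⟩ := tdeg_eq_one (w := w) (by omega)
    rw [hE', vdegM_single, one_smul] at hv
    have : (E' : Sym2 V) = (E : Sym2 V) := mdeg_inj hv
    rw [hE', Subtype.ext this]
  rw [Finset.sum_congr rfl h2,
    Finset.sum_ite_eq' P.support (Finsupp.single E 1) (fun w => coeff w P)] at h
  by_cases h0 : Finsupp.single E 1 ∈ P.support
  · rwa [if_pos h0] at h
  · exact Finsupp.notMem_support_iff.mp h0

end Graph

section Top

variable {V : Type} [DecidableEq V] {K : Type} [Field K]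

/-- an edge of the complete graph -/
def tE {p q : V} (h : p ≠ q) : (⊤ : SimpleGraph V).edgeSet :=
  ⟨s(p, q), by rw [SimpleGraph.mem_edgeSet]; exact h⟩

@[simp] lemma tE_val {p q : V} (h : p ≠ q) : (tE h : Sym2 V) = s(p, q) := rfl

/-- degree-two exponent vector -/
noncomputable def e2 (A B : (⊤ : SimpleGraph V).edgeSet) : (⊤ : SimpleGraph V).edgeSet →₀ ℕ :=
  Finsupp.single A 1 + Finsupp.single B 1

lemma e2_comm (A B : (⊤ : SimpleGraph V).edgeSet) : e2 A B = e2 B A := by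
  rw [e2, e2, add_comm]

lemma e2_ne {A B C D : (⊤ : SimpleGraph V).edgeSet} (hAC : A ≠ C) (hAD : A ≠ D) :
    e2 A B ≠ e2 C D := by
  intro h
  have h1 := DFunLike.congr_fun h A
  simp only [e2, Finsupp.add_apply, Finsupp.single_apply] at h1
  rw [if_pos trivial, if_neg (Ne.symm hAC), if_neg (Ne.symm hAD)] at h1
  split_ifs at h1 <;> omega

lemma vdegM_e2 (A B : (⊤ : SimpleGraph V).edgeSet) :
    vdegM (e2 A B) = mdeg (A : Sym2 V) + mdeg (B : Sym2 V) := by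
  rw [e2, vdegM_add, vdegM_single, vdegM_single, one_smul, one_smul]

variable {p q r s : V}

lemma quad_marriage (hpq : p ≠ q) (hpr : p ≠ r) (hps : p ≠ s) (hqr : q ≠ r)
    (hqs : q ≠ s) (hrs : r ≠ s) {w : (⊤ : SimpleGraph V).edgeSet →₀ ℕ}
    (hv : vdegM w = ({p, q, r, s} : Multiset V)) :
    w = e2 (tE hpq) (tE hrs) ∨ w = e2 (tE hpr) (tE hqs) ∨ w = e2 (tE hps) (tE hqr) := by
  have hcount : Multiset.count p ({p, q, r, s} : Multiset V) = 1 := by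
    simp [Multiset.insert_eq_cons, Multiset.count_cons, Multiset.count_singleton,
      hpq, hpr, hps]
  have hc := card_vdegM w
  rw [hv] at hc
  simp only [Multiset.insert_eq_cons, Multiset.card_cons, Multiset.card_singleton] at hc
  rcases tdeg_eq_two (w := w) (by omega) with ⟨E, hE⟩ | ⟨E1, E2, hne, hpair⟩
  · exfalso
    rw [hE, vdegM_single] at hv
    have := congrArg (Multiset.count p) hv
    rw [Multiset.count_nsmul, hcount] at this
    omega
  · rw [hpair, show (Finsupp.single E1 1 + Finsupp.single E2 1 : _) = e2 E1 E2 from rfl,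
      vdegM_e2] at hv
    have hq := quad_classify hv
    have conv : ∀ (A B : (⊤ : SimpleGraph V).edgeSet) (a b c d : V)
        (hab : a ≠ b) (hcd : c ≠ d), (A : Sym2 V) = s(a, b) → (B : Sym2 V) = s(c, d) →
        e2 A B = e2 (tE hab) (tE hcd) := by
      intro A B a b c d hab hcd hA hB
      rw [show A = tE hab from Subtype.ext hA, show B = tE hcd from Subtype.ext hB]
    rw [hpair]
    change e2 E1 E2 = _ ∨ e2 E1 E2 = _ ∨ e2 E1 E2 = _
    rcases hq with ⟨h1, h2⟩ | ⟨h1, h2⟩ | ⟨h1, h2⟩ | ⟨h1, h2⟩ | ⟨h1, h2⟩ | ⟨h1, h2⟩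
    · exact Or.inl (conv _ _ _ _ _ _ hpq hrs h1 h2)
    · exact Or.inl ((e2_comm E1 E2).trans (conv _ _ _ _ _ _ hpq hrs h2 h1))
    · exact Or.inr (Or.inl (conv _ _ _ _ _ _ hpr hqs h1 h2))
    · exact Or.inr (Or.inl ((e2_comm E1 E2).trans (conv _ _ _ _ _ _ hpr hqs h2 h1)))
    · exact Or.inr (Or.inr (conv _ _ _ _ _ _ hps hqr h1 h2))
    · exact Or.inr (Or.inr ((e2_comm E1 E2).trans (conv _ _ _ _ _ _ hps hqr h2 h1)))

lemma sum_ite_mem (P : MvPolynomial (⊤ : SimpleGraph V).edgeSet K)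
    (M : (⊤ : SimpleGraph V).edgeSet →₀ ℕ) :
    (∑ w ∈ P.support, if w = M then coeff w P else 0) = coeff M P := by
  rw [Finset.sum_ite_eq' P.support M (fun w => coeff w P)]
  by_cases hM : M ∈ P.support
  · rw [if_pos hM]
  · rw [if_neg hM, eq_comm]
    exact MvPolynomial.notMem_support_iff.mp hM

lemma tE_ne {a b c d : V} (hab : a ≠ b) (hcd : c ≠ d)
    (h1 : ¬(a = c ∧ b = d)) (h2 : ¬(a = d ∧ b = c)) : tE hab ≠ tE hcd := by
  intro h
  have hval := congrArg (fun x : (⊤ : SimpleGraph V).edgeSet => (x : Sym2 V)) h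
  simp only [tE_val] at hval
  rw [Sym2.eq_iff] at hval
  tauto

lemma ker_coeff_quad (P : MvPolynomial (⊤ : SimpleGraph V).edgeSet K)
    (hP : aevalE K ⊤ P = 0) (hpq : p ≠ q) (hpr : p ≠ r) (hps : p ≠ s)
    (hqr : q ≠ r) (hqs : q ≠ s) (hrs : r ≠ s) :
    coeff (e2 (tE hpq) (tE hrs)) P + coeff (e2 (tE hpr) (tE hqs)) P +
      coeff (e2 (tE hps) (tE hqr)) P = 0 := by
  have h := ker_sum_eq_zero P hP ({p, q, r, s} : Multiset V)
  have hM1 : vdegM (e2 (tE hpq) (tE hrs)) = ({p, q, r, s} : Multiset V) := by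
    rw [vdegM_e2, tE_val, tE_val, mdeg_mk, mdeg_mk]
    rfl
  have hM2 : vdegM (e2 (tE hpr) (tE hqs)) = ({p, q, r, s} : Multiset V) := by
    rw [vdegM_e2, tE_val, tE_val, mdeg_mk, mdeg_mk]
    show p ::ₘ r ::ₘ q ::ₘ s ::ₘ 0 = p ::ₘ q ::ₘ r ::ₘ s ::ₘ 0
    rw [Multiset.cons_swap r q]
  have hM3 : vdegM (e2 (tE hps) (tE hqr)) = ({p, q, r, s} : Multiset V) := by
    rw [vdegM_e2, tE_val, tE_val, mdeg_mk, mdeg_mk]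
    show p ::ₘ s ::ₘ q ::ₘ r ::ₘ 0 = p ::ₘ q ::ₘ r ::ₘ s ::ₘ 0
    rw [Multiset.cons_swap s q, Multiset.cons_swap s r]
  have hM12 : e2 (tE hpq) (tE hrs) ≠ e2 (tE hpr) (tE hqs) :=
    e2_ne (tE_ne hpq hpr (fun h => hqr h.2) (fun h => hpr h.1))
      (tE_ne hpq hqs (fun h => hpq h.1) (fun h => hps h.1))
  have hM13 : e2 (tE hpq) (tE hrs) ≠ e2 (tE hps) (tE hqr) :=
    e2_ne (tE_ne hpq hps (fun h => hqs h.2) (fun h => hps h.1))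
      (tE_ne hpq hqr (fun h => hpq h.1) (fun h => hpr h.1))
  have hM23 : e2 (tE hpr) (tE hqs) ≠ e2 (tE hps) (tE hqr) :=
    e2_ne (tE_ne hpr hps (fun h => hrs h.2) (fun h => hps h.1))
      (tE_ne hpr hqr (fun h => hpq h.1) (fun h => hpr h.1))
  have h2 : ∀ w ∈ P.support,
      (if vdegM w = ({p, q, r, s} : Multiset V) then coeff w P else 0) =
        (if w = e2 (tE hpq) (tE hrs) then coeff w P else 0) +
        (if w = e2 (tE hpr) (tE hqs) then coeff w P else 0) +
        (if w = e2 (tE hps) (tE hqr) then coeff w P else 0) := by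
    intro w _
    by_cases h1 : w = e2 (tE hpq) (tE hrs)
    · rw [h1, if_pos hM1, if_pos rfl, if_neg hM12, if_neg hM13, add_zero, add_zero]
    · by_cases h2 : w = e2 (tE hpr) (tE hqs)
      · rw [h2, if_pos hM2, if_neg (fun hc => hM12 hc.symm), if_pos rfl,
          if_neg hM23, zero_add, add_zero]
      · by_cases h3 : w = e2 (tE hps) (tE hqr)
        · rw [h3, if_pos hM3, if_neg (fun hc => hM13 hc.symm),
            if_neg (fun hc => hM23 hc.symm), if_pos rfl, zero_add, zero_add]
        · rw [if_neg h1, if_neg h2, if_neg h3, add_zero, add_zero]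
          refine if_neg fun hv => ?_
          rcases quad_marriage hpq hpr hps hqr hqs hrs hv with hh | hh | hh
          · exact h1 hh
          · exact h2 hh
          · exact h3 hh
  rw [Finset.sum_congr rfl h2, Finset.sum_add_distrib, Finset.sum_add_distrib,
    sum_ite_mem, sum_ite_mem, sum_ite_mem] at h
  exact h

lemma rename_mem_ker (G' : SimpleGraph V) {g : MvPolynomial G'.edgeSet K}
    (hg : g ∈ toricIdeal K G') :
    aevalE K ⊤
      (rename (Set.inclusion (SimpleGraph.edgeSet_mono (le_top : G' ≤ ⊤))) g) = 0 := by
  rw [aevalE, aeval_rename]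
  exact hg

lemma extIdeal_le_toric (G' : SimpleGraph V) :
    extIdeal K ⊤ G' le_top ≤ toricIdeal K ⊤ := by
  rw [extIdeal, Ideal.map_le_iff_le_comap]
  intro g hg
  rw [Ideal.mem_comap]
  exact rename_mem_ker G' hg

lemma core_coeff_zero (G' : SimpleGraph V) (E1 E2 : (⊤ : SimpleGraph V).edgeSet)
    (hE1 : (E1 : Sym2 V) ∉ G'.edgeSet) {x : MvPolynomial (⊤ : SimpleGraph V).edgeSet K}
    (hx : x ∈ extIdeal K ⊤ G' le_top) :
    ∀ v : (⊤ : SimpleGraph V).edgeSet →₀ ℕ, v ≤ e2 E1 E2 → coeff v x = 0 := by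
  have hx' : x ∈ Ideal.span
      ((rename (Set.inclusion (SimpleGraph.edgeSet_mono (le_top : G' ≤ ⊤))) :
        MvPolynomial G'.edgeSet K →ₐ[K] MvPolynomial (⊤ : SimpleGraph V).edgeSet K) ''
        (toricIdeal K G')) := hx
  refine Submodule.span_induction
    (p := fun y _ => ∀ v : (⊤ : SimpleGraph V).edgeSet →₀ ℕ, v ≤ e2 E1 E2 →
      coeff v y = 0) ?_ ?_ ?_ ?_ hx'
  · rintro y ⟨g, hg, rfl⟩ v hv
    have hker := rename_mem_ker (K := K) G' hg
    by_cases h1 : v E1 = 0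
    · by_cases h2 : v E2 = 0
      · have hv0 : v = 0 := by
          ext a
          have hla := (Finsupp.le_def.mp hv) a
          simp only [e2, Finsupp.add_apply, Finsupp.single_apply] at hla
          rcases eq_or_ne E1 a with rfl | hE1a
          · simpa using h1
          · rcases eq_or_ne E2 a with rfl | hE2a
            · simpa using h2
            · rw [if_neg hE1a, if_neg hE2a] at hla
              simpa using Nat.le_zero.mp hla
        rw [hv0]
        exact ker_coeff_zero _ hker
      · have hE12 : E1 ≠ E2 := by rintro rfl; exact h2 h1
        have hv2 : v = Finsupp.single E2 1 := by
          ext a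
          have hla := (Finsupp.le_def.mp hv) a
          simp only [e2, Finsupp.add_apply, Finsupp.single_apply] at hla
          rcases eq_or_ne E2 a with rfl | hE2a
          · rw [if_neg hE12, if_pos rfl] at hla
            rw [Finsupp.single_eq_same]
            omega
          · rw [if_neg hE2a] at hla
            rw [Finsupp.single_apply, if_neg hE2a]
            rcases eq_or_ne E1 a with rfl | hE1a
            · simpa using h1
            · rw [if_neg hE1a] at hla
              simpa using Nat.le_zero.mp hla
        rw [hv2]
        exact ker_coeff_single _ hker E2
    · apply MvPolynomial.coeff_rename_eq_zero
      intro u hu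
      exfalso
      have hzero : (Finsupp.mapDomain
          (Set.inclusion (SimpleGraph.edgeSet_mono (le_top : G' ≤ ⊤))) u) E1 = 0 := by
        apply Finsupp.mapDomain_notin_range
        rintro ⟨a, ha⟩
        apply hE1
        rw [← congrArg Subtype.val ha]
        exact a.2
      rw [hu] at hzero
      exact h1 hzero
  · intro v hv
    simp
  · intro a b _ _ iha ihb v hv
    rw [MvPolynomial.coeff_add, iha v hv, ihb v hv, add_zero]
  · intro a y _ ih v hv
    rw [smul_eq_mul, MvPolynomial.coeff_mul]
    refine Finset.sum_eq_zero fun z hz => ?_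
    rw [Finset.HasAntidiagonal.mem_antidiagonal] at hz
    rw [ih z.2 (le_trans (le_trans le_add_self (le_of_eq hz)) hv), mul_zero]

lemma XX_eq_monomial (A B : (⊤ : SimpleGraph V).edgeSet) :
    (X A * X B : MvPolynomial (⊤ : SimpleGraph V).edgeSet K) = monomial (e2 A B) 1 := by
  rw [← pow_one (X A : MvPolynomial (⊤ : SimpleGraph V).edgeSet K), ← pow_one (X B),
    X_pow_eq_monomial, X_pow_eq_monomial, monomial_mul, one_mul]
  rfl

lemma binom_mem (hpq : p ≠ q) (hpr : p ≠ r) (hps : p ≠ s) (hqr : q ≠ r)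
    (hqs : q ≠ s) (hrs : r ≠ s) :
    (X (tE hpq) * X (tE hrs) - X (tE hpr) * X (tE hqs) :
      MvPolynomial (⊤ : SimpleGraph V).edgeSet K) ∈ toricIdeal K ⊤ := by
  rw [mem_toricIdeal_iff, map_sub, map_mul, map_mul, aevalE, aeval_X, aeval_X,
    aeval_X, aeval_X]
  show (X p * X q) * (X r * X s) - (X p * X r) * (X q * X s) = (0 : MvPolynomial V K)
  ring

lemma coeff_binom (hpq : p ≠ q) (hpr : p ≠ r) (hps : p ≠ s) (hqr : q ≠ r)
    (hqs : q ≠ s) (hrs : r ≠ s) :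
    coeff (e2 (tE hpq) (tE hrs))
      (X (tE hpq) * X (tE hrs) - X (tE hpr) * X (tE hqs) :
        MvPolynomial (⊤ : SimpleGraph V).edgeSet K) = 1 := by
  have hne : e2 (tE hpr) (tE hqs) ≠ e2 (tE hpq) (tE hrs) :=
    e2_ne (tE_ne hpr hpq (fun h => hqr h.2.symm) (fun h => hpq h.1))
      (tE_ne hpr hrs (fun h => hpr h.1) (fun h => hps h.1))
  rw [MvPolynomial.coeff_sub, XX_eq_monomial, XX_eq_monomial, coeff_monomial,
    coeff_monomial, if_pos rfl, if_neg hne, sub_zero]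

lemma master (G₁ G₂ : SimpleGraph V)
    (hsum : toricIdeal K ⊤ = extIdeal K ⊤ G₁ le_top + extIdeal K ⊤ G₂ le_top)
    (hpq : p ≠ q) (hpr : p ≠ r) (hps : p ≠ s) (hqr : q ≠ r) (hqs : q ≠ s)
    (hrs : r ≠ s)
    (H1 : s(p, q) ∉ G₁.edgeSet ∨ s(r, s) ∉ G₁.edgeSet)
    (H2 : (s(p, q) ∉ G₂.edgeSet ∨ s(r, s) ∉ G₂.edgeSet) ∨
      ((s(p, r) ∉ G₂.edgeSet ∨ s(q, s) ∉ G₂.edgeSet) ∧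
        (s(p, s) ∉ G₂.edgeSet ∨ s(q, r) ∉ G₂.edgeSet))) :
    False := by
  have hBmem := binom_mem (K := K) hpq hpr hps hqr hqs hrs
  rw [hsum, Ideal.add_eq_sup, Submodule.mem_sup] at hBmem
  obtain ⟨y, hy, z, hz, hyz⟩ := hBmem
  have key : ∀ (G' : SimpleGraph V), (s(p, q) ∉ G'.edgeSet ∨ s(r, s) ∉ G'.edgeSet) →
      ∀ {x : MvPolynomial (⊤ : SimpleGraph V).edgeSet K},
        x ∈ extIdeal K ⊤ G' le_top → coeff (e2 (tE hpq) (tE hrs)) x = 0 := by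
    intro G' hmiss x hx
    rcases hmiss with h | h
    · exact core_coeff_zero G' (tE hpq) (tE hrs) h hx _ le_rfl
    · exact core_coeff_zero G' (tE hrs) (tE hpq) h hx _ (le_of_eq (e2_comm _ _))
  have hcy : coeff (e2 (tE hpq) (tE hrs)) y = 0 := key G₁ H1 hy
  have hcz : coeff (e2 (tE hpq) (tE hrs)) z = 0 := by
    rcases H2 with h | ⟨h2, h3⟩
    · exact key G₂ h hz
    · have hzker : aevalE K ⊤ z = 0 :=
        mem_toricIdeal_iff.mp (extIdeal_le_toric G₂ hz)
      have hK3 := ker_coeff_quad z hzker hpq hpr hps hqr hqs hrs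
      have c2 : coeff (e2 (tE hpr) (tE hqs)) z = 0 := by
        rcases h2 with h | h
        · exact core_coeff_zero G₂ (tE hpr) (tE hqs) h hz _ le_rfl
        · exact core_coeff_zero G₂ (tE hqs) (tE hpr) h hz _ (le_of_eq (e2_comm _ _))
      have c3 : coeff (e2 (tE hps) (tE hqr)) z = 0 := by
        rcases h3 with h | h
        · exact core_coeff_zero G₂ (tE hps) (tE hqr) h hz _ le_rfl
        · exact core_coeff_zero G₂ (tE hqr) (tE hps) h hz _ (le_of_eq (e2_comm _ _))
      rw [c2, c3, add_zero, add_zero] at hK3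
      exact hK3
  have h1 := coeff_binom (K := K) hpq hpr hps hqr hqs hrs
  rw [← hyz, MvPolynomial.coeff_add, hcy, hcz, add_zero] at h1
  exact zero_ne_one h1

end Top

end ToricAux9

/-- Let `n ≥ 4` and let `I_{K_n} = I_{G₁} + I_{G₂}` be a subgraph
splitting of the toric ideal of the complete graph `K_n`.  If `e` is an edge of `K_n`
not in `G₁`, and `f` and `h` are two distinct edges of `K_n` neither of which is in
`G₂`, then `f` and `h` are not adjacent (they share no common vertex). -/
theorem completeGraph_splitting_missing_edges_not_adjacent
    (K : Type) [Field K] (n : ℕ) (hn : 4 ≤ n) (G₁ G₂ : SimpleGraph (Fin n))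
    (hsplit : IsSubgraphSplitting K (⊤ : SimpleGraph (Fin n)) G₁ G₂ le_top le_top)
    (e f h : Sym2 (Fin n))
    (he : e ∈ (⊤ : SimpleGraph (Fin n)).edgeSet) (heG₁ : e ∉ G₁.edgeSet)
    (hf : f ∈ (⊤ : SimpleGraph (Fin n)).edgeSet) (hfG₂ : f ∉ G₂.edgeSet)
    (hh : h ∈ (⊤ : SimpleGraph (Fin n)).edgeSet) (hhG₂ : h ∉ G₂.edgeSet)
    (hfh : f ≠ h) :
    ¬ ∃ v : Fin n, v ∈ f ∧ v ∈ h := by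
  rintro ⟨a, haf, hah⟩
  obtain ⟨b, rfl⟩ := Sym2.mem_iff_exists.mp haf
  obtain ⟨c, rfl⟩ := Sym2.mem_iff_exists.mp hah
  have hab : a ≠ b := (SimpleGraph.top_adj a b).mp ((SimpleGraph.mem_edgeSet _).mp hf)
  have hac : a ≠ c := (SimpleGraph.top_adj a c).mp ((SimpleGraph.mem_edgeSet _).mp hh)
  have hbc : b ≠ c := fun hbcEq => hfh (by rw [hbcEq])
  have hsum := hsplit.1
  have hd : ∃ d : Fin n, d ∉ ({a, b, c} : Finset (Fin n)) := by
    by_contra hcon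
    push_neg at hcon
    have hcard : (Finset.univ : Finset (Fin n)).card ≤ ({a, b, c} : Finset (Fin n)).card :=
      Finset.card_le_card fun x _ => hcon x
    have t0 : ({c} : Finset (Fin n)).card = 1 := Finset.card_singleton c
    have t1 := Finset.card_insert_le b ({c} : Finset (Fin n))
    have t2 := Finset.card_insert_le a ({b, c} : Finset (Fin n))
    rw [Finset.card_univ, Fintype.card_fin] at hcard
    omega
  obtain ⟨d, hd⟩ := hd
  simp only [Finset.mem_insert, Finset.mem_singleton, not_or] at hd
  obtain ⟨hda, hdb, hdc⟩ := hd
  by_cases hae : a ∈ e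
  · obtain ⟨t, rfl⟩ := Sym2.mem_iff_exists.mp hae
    have hat : a ≠ t := (SimpleGraph.top_adj a t).mp ((SimpleGraph.mem_edgeSet _).mp he)
    by_cases htb : t = b
    · subst htb
      exact ToricAux9.master (K := K) G₁ G₂ hsum hab hac (Ne.symm hda) hbc
        (Ne.symm hdb) (Ne.symm hdc) (Or.inl heG₁) (Or.inl (Or.inl hfG₂))
    · by_cases htc : t = c
      · subst htc
        exact ToricAux9.master (K := K) G₁ G₂ hsum hac hab (Ne.symm hda)
          (Ne.symm hbc) (Ne.symm hdc) (Ne.symm hdb) (Or.inl heG₁)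
          (Or.inl (Or.inl hhG₂))
      · exact ToricAux9.master (K := K) G₁ G₂ hsum hat hab hac htb htc hbc
          (Or.inl heG₁) (Or.inr ⟨Or.inl hfG₂, Or.inl hhG₂⟩)
  · by_cases hbe : b ∈ e
    · obtain ⟨t, rfl⟩ := Sym2.mem_iff_exists.mp hbe
      have hbt : b ≠ t := (SimpleGraph.top_adj b t).mp ((SimpleGraph.mem_edgeSet _).mp he)
      have hta : t ≠ a := fun hEq => hae (hEq ▸ Sym2.mem_iff.mpr (Or.inr rfl))
      by_cases htc : t = c
      · subst htc
        exact ToricAux9.master (K := K) G₁ G₂ hsum (Ne.symm hda) hab hac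
          hdb hdc hbc (Or.inr heG₁)
          (Or.inr ⟨Or.inl hfG₂, Or.inl hhG₂⟩)
      · exact ToricAux9.master (K := K) G₁ G₂ hsum hac hab (Ne.symm hta)
          (Ne.symm hbc) (fun hEq => htc hEq.symm) hbt (Or.inr heG₁)
          (Or.inl (Or.inl hhG₂))
    · by_cases hce : c ∈ e
      · obtain ⟨t, rfl⟩ := Sym2.mem_iff_exists.mp hce
        have hct : c ≠ t := (SimpleGraph.top_adj c t).mp ((SimpleGraph.mem_edgeSet _).mp he)
        have hta : t ≠ a := fun hEq => hae (hEq ▸ Sym2.mem_iff.mpr (Or.inr rfl))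
        have htb : t ≠ b := fun hEq => hbe (hEq ▸ Sym2.mem_iff.mpr (Or.inr rfl))
        exact ToricAux9.master (K := K) G₁ G₂ hsum hab hac (Ne.symm hta) hbc
          (Ne.symm htb) hct (Or.inr heG₁) (Or.inl (Or.inl hfG₂))
      · revert he heG₁ hae hbe hce
        induction e using Sym2.ind with
        | _ u v =>
          intro he heG₁ hae hbe hce
          have huv : u ≠ v :=
            (SimpleGraph.top_adj u v).mp ((SimpleGraph.mem_edgeSet _).mp he)
          have hau : a ≠ u := fun hEq => hae (hEq ▸ Sym2.mem_iff.mpr (Or.inl rfl))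
          have hav : a ≠ v := fun hEq => hae (hEq ▸ Sym2.mem_iff.mpr (Or.inr rfl))
          have hbu : b ≠ u := fun hEq => hbe (hEq ▸ Sym2.mem_iff.mpr (Or.inl rfl))
          have hbv : b ≠ v := fun hEq => hbe (hEq ▸ Sym2.mem_iff.mpr (Or.inr rfl))
          exact ToricAux9.master (K := K) G₁ G₂ hsum hab hau hav hbu hbv huv
            (Or.inr heG₁) (Or.inl (Or.inl hfG₂))
end
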